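/- arXiv:0709.1184 — 11 statements merged into one kernel-verified Lean document; each statement's English description precedes it below -/
import Mathlib

section
/- If f : ℝ → ℝ is continuous and J₀, J₁, ..., J_{n-1} are nonempty closed intervals with J_{i+1} ⊆ f '' J_i for 0 ≤ i ≤ n-2 and J₀ ⊆ f '' J_{n-1}, then there exists a point y ∈ J₀ with f^[n] y = y and f^[i] y ∈ J_i for all 0 ≤ i ≤ n-1. -/
/-!
If `Icc c d ⊆ f '' Icc p q`, the last preimage of `c` before the first preimage of `d` (or the
mirror image of this) bounds a subinterval of `Icc p q` that `f` maps exactly onto `Icc c d`.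
Pulling back along the chain one step at a time gives a nonempty interval `K ⊆ J₀` with
`f^[i] '' K ⊆ J i` and `f^[n] '' K ⊇ J₀ ⊇ K`, so `f^[n]` has a fixed point in `K`.
-/

open Set Function
open scoped Pointwise

theorem exists_Icc_subset_image_eq_Icc_of_le {f : ℝ → ℝ} (hf : Continuous f) {p q : ℝ}
    (hpq : p ≤ q) (hfpq : f p ≤ f q) :
    ∃ a b, Icc a b ⊆ Icc p q ∧ f '' Icc a b = Icc (f p) (f q) := by
  -- `B` is the first hit of `f q` in `[p, q]`, and `A` the last hit of `f p` in `[p, B]`.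
  obtain ⟨B, ⟨⟨hpB, hBq⟩, hfB⟩, hBmin⟩ := (isCompact_Icc.inter_right
    (isClosed_singleton.preimage hf)).exists_isLeast ⟨q, right_mem_Icc.2 hpq, rfl⟩
  obtain ⟨A, ⟨⟨hpA, hAB⟩, hfA⟩, hAmax⟩ := (isCompact_Icc.inter_right
    (isClosed_singleton.preimage hf)).exists_isGreatest ⟨p, left_mem_Icc.2 hpB, rfl⟩
  simp only [mem_preimage, mem_singleton_iff] at hfA hfB
  refine ⟨A, B, Icc_subset_Icc hpA hBq, Subset.antisymm ?_ ?_⟩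
  -- Leaving `[f p, f q]` inside `[A, B]` would, by the IVT, produce a hit beyond `A` or before `B`.
  · rintro _ ⟨x, hx, rfl⟩
    refine ⟨?_, ?_⟩
    · by_contra! hlt
      obtain ⟨z, hz, hfz⟩ := intermediate_value_Icc hx.2 hf.continuousOn ⟨hlt.le, hfB ▸ hfpq⟩
      have hzA : z ≤ A := hAmax ⟨⟨hpA.trans (hx.1.trans hz.1), hz.2⟩, hfz⟩
      obtain rfl : x = z := le_antisymm hz.1 (hzA.trans hx.1)
      exact hlt.ne hfz
    · by_contra! hlt
      obtain ⟨z, hz, hfz⟩ := intermediate_value_Icc hx.1 hf.continuousOn ⟨hfA ▸ hfpq, hlt.le⟩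
      have hBz : B ≤ z := hBmin ⟨⟨hpA.trans hz.1, (hz.2.trans hx.2).trans hBq⟩, hfz⟩
      obtain rfl : x = z := le_antisymm (hx.2.trans hBz) hz.2
      exact hlt.ne' hfz
  · simpa only [hfA, hfB] using intermediate_value_Icc hAB hf.continuousOn

theorem exists_Icc_subset_image_eq_Icc {f : ℝ → ℝ} (hf : Continuous f) {p q c d : ℝ}
    (hcd : c ≤ d) (h : Icc c d ⊆ f '' Icc p q) :
    ∃ a b, Icc a b ⊆ Icc p q ∧ f '' Icc a b = Icc c d := by
  obtain ⟨u, hu, rfl⟩ := h (left_mem_Icc.2 hcd)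
  obtain ⟨v, hv, rfl⟩ := h (right_mem_Icc.2 hcd)
  rcases le_total u v with huv | hvu
  · obtain ⟨a, b, hsub, himg⟩ := exists_Icc_subset_image_eq_Icc_of_le hf huv hcd
    exact ⟨a, b, hsub.trans (Icc_subset_Icc hu.1 hv.2), himg⟩
  · obtain ⟨a, b, hsub, himg⟩ := exists_Icc_subset_image_eq_Icc_of_le (f := f ∘ Neg.neg)
      (hf.comp continuous_neg) (neg_le_neg hvu) (by simpa using hcd)
    have hneg : ∀ s t : ℝ, Neg.neg '' Icc s t = Icc (-t) (-s) := fun s t => by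
      rw [image_neg_eq_neg, neg_Icc]
    refine ⟨-b, -a, ?_, ?_⟩
    · rw [← hneg]
      refine (image_mono hsub).trans ?_
      rw [hneg, neg_neg, neg_neg]
      exact Icc_subset_Icc hv.1 hu.2
    · rw [← hneg, ← image_comp, himg]
      simp

theorem exists_Icc_mapsTo_iterate_image_eq {f : ℝ → ℝ} (hf : Continuous f) {a b : ℕ → ℝ} (m : ℕ)
    (hab : ∀ i ≤ m, a i ≤ b i)
    (hcov : ∀ i < m, Icc (a (i + 1)) (b (i + 1)) ⊆ f '' Icc (a i) (b i)) :
    ∃ α β, (∀ i ≤ m, MapsTo f^[i] (Icc α β) (Icc (a i) (b i))) ∧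
      f^[m] '' Icc α β = Icc (a m) (b m) := by
  induction m with
  | zero =>
    refine ⟨a 0, b 0, fun i hi => ?_, image_id _⟩
    obtain rfl : i = 0 := Nat.le_zero.1 hi
    exact mapsTo_id _
  | succ m ih =>
    obtain ⟨α, β, hmaps, himg⟩ :=
      ih (fun i hi => hab i (by omega)) (fun i hi => hcov i (by omega))
    have hsurj : Icc (a (m + 1)) (b (m + 1)) ⊆ f^[m + 1] '' Icc α β := by
      rw [iterate_succ', image_comp, himg]
      exact hcov m m.lt_succ_self
    obtain ⟨α', β', hsub, himg'⟩ :=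
      exists_Icc_subset_image_eq_Icc (hf.iterate _) (hab _ le_rfl) hsurj
    refine ⟨α', β', fun i hi => ?_, himg'⟩
    rcases hi.lt_or_eq with hi | rfl
    · exact (hmaps i (by omega)).mono_left hsub
    · exact himg' ▸ mapsTo_image _ _

theorem stmt_1 (f : ℝ → ℝ) (hf : Continuous f) (n : ℕ) (hn : 1 ≤ n)
    (a b : ℕ → ℝ) (hab : ∀ i < n, a i ≤ b i)
    (hcov : ∀ i, i + 1 < n → Set.Icc (a (i+1)) (b (i+1)) ⊆ f '' Set.Icc (a i) (b i))
    (hcov0 : Set.Icc (a 0) (b 0) ⊆ f '' Set.Icc (a (n-1)) (b (n-1))) :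
    ∃ y ∈ Set.Icc (a 0) (b 0), f^[n] y = y ∧ ∀ i < n, f^[i] y ∈ Set.Icc (a i) (b i) := by
  obtain ⟨α, β, hmaps, himg⟩ := exists_Icc_mapsTo_iterate_image_eq hf (n - 1)
    (fun i hi => hab i (by omega)) (fun i hi => hcov i (by omega))
  have hαβ : α ≤ β :=
    nonempty_Icc.1 (himg ▸ nonempty_Icc.2 (hab (n - 1) (by omega))).of_image
  have hreturn : SurjOn f^[n] (Icc α β) (Icc α β) :=
    calc Icc α β ⊆ Icc (a 0) (b 0) := fun x hx => hmaps 0 (Nat.zero_le _) hx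
      _ ⊆ f '' Icc (a (n - 1)) (b (n - 1)) := hcov0
      _ = f^[n] '' Icc α β := by
        rw [← himg, ← image_comp, ← iterate_succ', Nat.succ_eq_add_one, Nat.sub_add_cancel hn]
  obtain ⟨y, hy, hfix⟩ :=
    exists_mem_Icc_isFixedPt_of_surjOn (hf.iterate n).continuousOn hαβ hreturn
  exact ⟨y, hmaps 0 (Nat.zero_le _) hy, hfix, fun i hi => hmaps i (by omega) hy⟩
end

section
/- If f : ℝ → ℝ is continuous and has a periodic orbit of period m+n of type L(m,n), i.e., points x₀,...,x_{m+n-1} with x_{i+1}=f(x_i) cyclically and x_{m+n-1} < ⋯ < x_{n+1} < x_n < x₀ < x₁ < ⋯ < x_{n-1}, where m,n ≥ 2, then f has a periodic orbit of period m+n+1 of type L(m,n+1), i.e., points y₀,...,y_{m+n} with y_{i+1}=f(y_i) cyclically, all distinct, and y_{m+n} < ⋯ < y_{n+2} < y_{n+1} < y₀ < y₁ < ⋯ < y_n. -/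
/-!
Let `z` be the largest fixed point of `f` in `[x n, x 0]`, so that `t < f t` on `(z, x 0]`.
With `J_R = [z, x 0]`, `J_L = [x n, z]`, `A i = [x i, x (i + 1)]` and `B i = [x (i + 1), x i]`,
each interval of the loop `J_R, J_R, A 0, …, A (n - 2), J_L, B n, …, B (m + n - 2), J_R` is
covered by the image of the previous one, so some `w` of period dividing `m + n + 1` follows
this itinerary. The point `w` is not fixed (`J_R` and `A 0` only share `x 0`, which is not
fixed), so no point of its orbit is fixed, and the weak order of consecutive iterates read off
from adjacent intervals of the loop is strict: `w < f w < ⋯ < f^[n] w` and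
`f^[m + n] w < ⋯ < f^[n + 1] w < z < w`.
-/

open Set Function

theorem Function.IsPeriodicPt.isFixedPt_of_isFixedPt_iterate {α : Type*} {f : α → α}
    {L i : ℕ} {w : α} (hw : IsPeriodicPt f L w) (hL : 0 < L) (h : IsFixedPt f (f^[i] w)) :
    IsFixedPt f w := by
  rwa [← minimalPeriod_eq_one_iff_isFixedPt,
    minimalPeriod_apply_iterate (mk_mem_periodicPts hL hw), minimalPeriod_eq_one_iff_isFixedPt] at h

section Intervals

variable {f : ℝ → ℝ}

theorem Icc_subset_image_Icc_of_le {a b c d : ℝ} (hf : ContinuousOn f (Icc a b))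
    (hab : a ≤ b) (hc : f a ≤ c) (hd : d ≤ f b) : Icc c d ⊆ f '' Icc a b :=
  (Icc_subset_Icc hc hd).trans (intermediate_value_Icc hab hf)

theorem Icc_subset_image_Icc_of_ge {a b c d : ℝ} (hf : ContinuousOn f (Icc a b))
    (hab : a ≤ b) (hc : f b ≤ c) (hd : d ≤ f a) : Icc c d ⊆ f '' Icc a b :=
  (Icc_subset_Icc hc hd).trans (intermediate_value_Icc' hab hf)

theorem exists_Icc_image_eq_Icc_of_le {s t : ℝ} (hf : ContinuousOn f (Icc s t))
    (hst : s ≤ t) (hfst : f s ≤ f t) :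
    ∃ a b, s ≤ a ∧ b ≤ t ∧ f '' Icc a b = Icc (f s) (f t) := by
  -- `a` is the last visit of the level `f s` and `b` the first visit of `f t` after `a`
  obtain ⟨a, ⟨⟨hsa, hat⟩, hfa⟩, ha_max⟩ :=
    (isCompact_Icc.of_isClosed_subset
      (hf.preimage_isClosed_of_isClosed isClosed_Icc isClosed_singleton)
      inter_subset_left).exists_isGreatest ⟨s, ⟨le_rfl, hst⟩, rfl⟩
  have hfa' : ContinuousOn f (Icc a t) := hf.mono (Icc_subset_Icc_left hsa)
  obtain ⟨b, ⟨⟨hab, hbt⟩, hfb⟩, hb_min⟩ :=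
    (isCompact_Icc.of_isClosed_subset
      (hfa'.preimage_isClosed_of_isClosed isClosed_Icc isClosed_singleton)
      inter_subset_left).exists_isLeast ⟨t, ⟨hat, le_rfl⟩, rfl⟩
  rw [mem_preimage, mem_singleton_iff] at hfa hfb
  have hfab : ContinuousOn f (Icc a b) := hfa'.mono (Icc_subset_Icc_right hbt)
  refine ⟨a, b, hsa, hbt, Subset.antisymm ?_ ?_⟩
  · rintro _ ⟨r, ⟨har, hrb⟩, rfl⟩
    refine ⟨?_, ?_⟩
    all_goals by_contra! hr
    · obtain ⟨q, ⟨hrq, hqb⟩, hq⟩ :=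
        intermediate_value_Icc hrb (hfab.mono (Icc_subset_Icc_left har)) ⟨hr.le, hfb ▸ hfst⟩
      have hqa : q ≤ a := ha_max ⟨⟨hsa.trans (har.trans hrq), hqb.trans hbt⟩, hq⟩
      exact hr.ne (le_antisymm hrq (hqa.trans har) ▸ hq)
    · obtain ⟨q, ⟨haq, hqr⟩, hq⟩ :=
        intermediate_value_Icc har (hfab.mono (Icc_subset_Icc_right hrb)) ⟨hfa ▸ hfst, hr.le⟩
      have hbq : b ≤ q := hb_min ⟨⟨haq, (hqr.trans hrb).trans hbt⟩, hq⟩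
      exact hr.ne' (le_antisymm hqr (hrb.trans hbq) ▸ hq)
  · rw [← hfa, ← hfb]
    exact intermediate_value_Icc hab hfab

theorem exists_Icc_image_eq_of_subset_image {u v c d : ℝ}
    (hf : ContinuousOn f (Icc u v)) (hcd : c ≤ d) (h : Icc c d ⊆ f '' Icc u v) :
    ∃ a b, u ≤ a ∧ b ≤ v ∧ f '' Icc a b = Icc c d := by
  obtain ⟨s, ⟨hus, hsv⟩, rfl⟩ := h (left_mem_Icc.2 hcd)
  obtain ⟨t, ⟨hut, htv⟩, rfl⟩ := h (right_mem_Icc.2 hcd)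
  rcases le_total s t with hst | hts
  · obtain ⟨a, b, hsa, hbt, himg⟩ :=
      exists_Icc_image_eq_Icc_of_le (hf.mono (Icc_subset_Icc hus htv)) hst hcd
    exact ⟨a, b, hus.trans hsa, hbt.trans htv, himg⟩
  · have hg : ContinuousOn (f ∘ Neg.neg) (Icc (-s) (-t)) :=
      hf.comp continuousOn_neg fun r ⟨h1, h2⟩ => ⟨by linarith, by linarith⟩
    obtain ⟨a, b, hsa, hbt, himg⟩ :=
      exists_Icc_image_eq_Icc_of_le hg (neg_le_neg hts) (by simpa using hcd)
    refine ⟨-b, -a, by linarith, by linarith, ?_⟩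
    rw [← image_neg_Icc, ← image_comp, himg]
    simp

theorem exists_Icc_itinerary_of_covers (hf : Continuous f) {lo hi : ℕ → ℝ}
    {J : ℕ} (hle : ∀ j ≤ J, lo j ≤ hi j)
    (hcov : ∀ j < J, Icc (lo (j + 1)) (hi (j + 1)) ⊆ f '' Icc (lo j) (hi j)) :
    ∃ a b, (∀ j ≤ J, MapsTo f^[j] (Icc a b) (Icc (lo j) (hi j))) ∧
      f^[J] '' Icc a b = Icc (lo J) (hi J) := by
  induction J with
  | zero => exact ⟨lo 0, hi 0, fun j hj => by simp [Nat.le_zero.1 hj, mapsTo_id], by simp⟩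
  | succ J ih =>
    obtain ⟨a, b, hmaps, himg⟩ :=
      ih (fun j hj => hle j (by omega)) (fun j hj => hcov j (by omega))
    have hsub : Icc (lo (J + 1)) (hi (J + 1)) ⊆ f^[J + 1] '' Icc a b := by
      rw [iterate_succ', image_comp, himg]
      exact hcov J J.lt_add_one
    obtain ⟨a', b', ha, hb, himg'⟩ :=
      exists_Icc_image_eq_of_subset_image (hf.iterate _).continuousOn (hle _ le_rfl) hsub
    refine ⟨a', b', fun j hj => ?_, himg'⟩
    rcases hj.lt_or_eq with hj | rfl
    · exact (hmaps j (by omega)).mono_left (Icc_subset_Icc ha hb)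
    · exact himg' ▸ mapsTo_image _ _

theorem exists_isPeriodicPt_itinerary_of_covers (hf : Continuous f)
    {lo hi : ℕ → ℝ} {L : ℕ} (hle : ∀ j ≤ L, lo j ≤ hi j)
    (hcov : ∀ j < L, Icc (lo (j + 1)) (hi (j + 1)) ⊆ f '' Icc (lo j) (hi j))
    (hlo : lo L = lo 0) (hhi : hi L = hi 0) :
    ∃ w, IsPeriodicPt f L w ∧ ∀ j ≤ L, f^[j] w ∈ Icc (lo j) (hi j) := by
  obtain ⟨a, b, hmaps, himg⟩ := exists_Icc_itinerary_of_covers hf hle hcov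
  have hab : a ≤ b := by
    by_contra! h
    rw [Icc_eq_empty h.not_ge, image_empty] at himg
    exact (nonempty_Icc.2 (hle L le_rfl)).ne_empty himg.symm
  have hsurj : SurjOn f^[L] (Icc a b) (Icc a b) := by
    rw [SurjOn, himg, hlo, hhi]
    exact hmaps 0 L.zero_le
  obtain ⟨w, hw, hfix⟩ :=
    exists_mem_Icc_isFixedPt_of_surjOn (hf.iterate L).continuousOn hab hsurj
  exact ⟨w, hfix, fun j hj => hmaps j hj hw⟩

theorem exists_isFixedPt_forall_Ioc_lt_apply {a b : ℝ}
    (hf : ContinuousOn f (Icc a b)) (hab : a ≤ b) (ha : f a ≤ a) (hb : b < f b) :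
    ∃ z ∈ Icc a b, IsFixedPt f z ∧ ∀ t ∈ Ioc z b, t < f t := by
  have hg : ContinuousOn (fun t => f t - t) (Icc a b) := hf.sub continuousOn_id
  obtain ⟨z, ⟨hz, hfz⟩, hz_max⟩ :=
    (isCompact_Icc.of_isClosed_subset
      (hg.preimage_isClosed_of_isClosed isClosed_Icc isClosed_singleton)
      inter_subset_left).exists_isGreatest
      (intermediate_value_Icc hab hg (show (0 : ℝ) ∈ _ from ⟨by linarith, by linarith⟩))
  refine ⟨z, hz, sub_eq_zero.1 hfz, fun t ⟨hzt, htb⟩ => ?_⟩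
  by_contra! ht
  obtain ⟨s, hs, hfs⟩ :=
    intermediate_value_Icc htb (hg.mono (Icc_subset_Icc_left (hz.1.trans hzt.le)))
      (show (0 : ℝ) ∈ _ from ⟨by linarith, by linarith⟩)
  exact (hzt.trans_le hs.1).not_ge (hz_max ⟨⟨hz.1.trans (hzt.le.trans hs.1), hs.2⟩, hfs⟩)

end Intervals

structure IsTypeL (f : ℝ → ℝ) (m n : ℕ) (x : ℕ → ℝ) : Prop where
  apply_eq : ∀ i < m + n, f (x i) = x ((i + 1) % (m + n))
  succ_lt : ∀ i, n ≤ i → i + 1 < m + n → x (i + 1) < x i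
  x_n_lt_x_zero : x n < x 0
  lt_succ : ∀ i, i + 1 < n → x i < x (i + 1)

namespace IsTypeL

-- Endpoints of the `j`-th interval (`j ≤ m + n + 1`) of the loop `J_R, J_R, A 0, …, J_R`.
def loopLo (x : ℕ → ℝ) (z : ℝ) (m n j : ℕ) : ℝ :=
  if j ≤ 1 then z else if j ≤ n then x (j - 2) else if j = n + 1 then x n
  else if j ≤ m + n then x (j - 1) else z

def loopHi (x : ℕ → ℝ) (z : ℝ) (m n j : ℕ) : ℝ :=
  if j ≤ 1 then x 0 else if j ≤ n then x (j - 1) else if j = n + 1 then z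
  else if j ≤ m + n then x (j - 2) else x 0

variable {f : ℝ → ℝ} {m n : ℕ} {x : ℕ → ℝ} {z : ℝ}

theorem apply_of_lt (hx : IsTypeL f m n x) {i : ℕ} (hi : i + 1 < m + n) :
    f (x i) = x (i + 1) := by
  rw [hx.apply_eq i (by omega), Nat.mod_eq_of_lt hi]

theorem apply_of_add_one_eq (hx : IsTypeL f m n x) {i : ℕ} (hi : i + 1 = m + n) :
    f (x i) = x 0 := by
  rw [hx.apply_eq i (by omega), hi, Nat.mod_self]

theorem strictMonoOn (hx : IsTypeL f m n x) : StrictMonoOn x (Iio n) :=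
  strictMonoOn_of_lt_succ ordConnected_Iio fun i _ _ hi => hx.lt_succ i hi

theorem strictAntiOn (hx : IsTypeL f m n x) : StrictAntiOn x (Ico n (m + n)) :=
  strictAntiOn_of_succ_lt ordConnected_Ico fun i _ hi hi' => hx.succ_lt i hi.1 hi'.2

theorem x_zero_le (hx : IsTypeL f m n x) {i : ℕ} (hi : i < n) : x 0 ≤ x i :=
  hx.strictMonoOn.monotoneOn (mem_Iio.2 (by omega)) hi i.zero_le

theorem le_x_n (hx : IsTypeL f m n x) {i : ℕ} (hni : n ≤ i) (hi : i < m + n) : x i ≤ x n :=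
  hx.strictAntiOn.antitoneOn ⟨le_rfl, by omega⟩ ⟨hni, hi⟩ hni

theorem injOn (hx : IsTypeL f m n x) : InjOn x (Iio (m + n)) := by
  rw [← Iio_union_Ico_eq_Iio (Nat.le_add_left n m),
    injOn_union ((Iio_disjoint_Ici le_rfl).mono_right Ico_subset_Ici_self)]
  refine ⟨hx.strictMonoOn.injOn, hx.strictAntiOn.injOn, fun i hi j hj => ?_⟩
  exact ((hx.le_x_n hj.1 hj.2).trans_lt (hx.x_n_lt_x_zero.trans_le (hx.x_zero_le hi))).ne'

theorem loopLo_le_loopHi (hx : IsTypeL f m n x) (hzn : x n ≤ z) (hz0 : z ≤ x 0) (j : ℕ) :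
    loopLo x z m n j ≤ loopHi x z m n j := by
  obtain hj | ⟨k, rfl⟩ : j ≤ 1 ∨ ∃ k, j = k + 2 := by rcases j with _ | _ | k <;> simp
  · simpa (disch := omega) only [loopLo, loopHi, if_pos]
  rcases le_or_gt (k + 2) n with hk | hk
  · simp (disch := omega) only [loopLo, loopHi, if_pos, if_neg, Nat.add_sub_cancel]
    exact (hx.lt_succ k (by omega)).le
  rcases eq_or_ne (k + 1) n with rfl | hk'
  · simpa (disch := omega) only [loopLo, loopHi, if_pos, if_neg]
  rcases le_or_gt (k + 2) (m + n) with hk'' | hk''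
  · simp (disch := omega) only [loopLo, loopHi, if_pos, if_neg, Nat.add_sub_cancel]
    exact (hx.succ_lt k (by omega) (by omega)).le
  · simpa (disch := omega) only [loopLo, loopHi, if_pos, if_neg]

theorem loop_covers (hf : Continuous f) (hx : IsTypeL f m n x) (hm : 2 ≤ m) (hn : 2 ≤ n)
    (hz : IsFixedPt f z) (hzn : x n ≤ z) (hz0 : z ≤ x 0) {j : ℕ} (hj : j < m + n + 1) :
    Icc (loopLo x z m n (j + 1)) (loopHi x z m n (j + 1)) ⊆
      f '' Icc (loopLo x z m n j) (loopHi x z m n j) := by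
  have hc {a b : ℝ} : ContinuousOn f (Icc a b) := hf.continuousOn
  have h01 := hx.lt_succ 0 (by omega)
  obtain rfl | rfl | ⟨k, rfl⟩ : j = 0 ∨ j = 1 ∨ ∃ k, j = k + 2 := by
    rcases j with _ | _ | k <;> simp
  · simp (disch := omega) only [loopLo, loopHi, if_pos]
    exact Icc_subset_image_Icc_of_le hc hz0 hz.le (h01.le.trans_eq (hx.apply_of_lt (by omega)).symm)
  · simp (disch := omega) only [loopLo, loopHi, if_pos, if_neg, Nat.reduceAdd, Nat.reduceSub]
    exact Icc_subset_image_Icc_of_le hc hz0 (hz.symm ▸ hz0) (hx.apply_of_lt (by omega)).ge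
  rcases lt_trichotomy (k + 2) n with hk | rfl | hk
  · simp (disch := omega) only [loopLo, loopHi, if_pos, if_neg, Nat.add_sub_cancel,
      Nat.reduceSubDiff]
    exact Icc_subset_image_Icc_of_le hc (hx.lt_succ k (by omega)).le
      (hx.apply_of_lt (by omega)).le (hx.apply_of_lt (by omega)).ge
  · simp (disch := omega) only [loopLo, loopHi, if_pos, if_neg, if_true, Nat.add_sub_cancel,
      Nat.reduceSubDiff]
    exact Icc_subset_image_Icc_of_ge hc (hx.lt_succ k (by omega)).le
      (hx.apply_of_lt (by omega)).le (hz0.trans (hx.x_zero_le (by omega)) |>.trans_eq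
        (hx.apply_of_lt (by omega)).symm)
  rcases eq_or_ne (k + 1) n with rfl | hk'
  · simp (disch := omega) only [loopLo, loopHi, if_pos, if_neg, if_true, Nat.add_sub_cancel,
      Nat.reduceSubDiff]
    exact Icc_subset_image_Icc_of_le hc hzn (hx.apply_of_lt (by omega)).le (hz.symm ▸ hzn)
  rcases lt_or_eq_of_le (show k + 2 ≤ m + n by omega) with hk'' | hk''
  · simp (disch := omega) only [loopLo, loopHi, if_pos, if_neg, Nat.add_sub_cancel,
      Nat.reduceSubDiff]
    exact Icc_subset_image_Icc_of_le hc (hx.succ_lt k (by omega) (by omega)).le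
      (hx.apply_of_lt (by omega)).le (hx.apply_of_lt (by omega)).ge
  · simp (disch := omega) only [loopLo, loopHi, if_pos, if_neg, Nat.add_sub_cancel,
      Nat.reduceSubDiff]
    exact Icc_subset_image_Icc_of_ge hc (hx.succ_lt k (by omega) (by omega)).le
      ((hx.apply_of_lt (by omega)).trans_le ((hx.le_x_n (by omega) (by omega)).trans hzn))
      (hx.apply_of_add_one_eq (by omega)).ge

theorem loopHi_eq_loopLo_succ {i : ℕ} (hi : 1 ≤ i) (hin : i < n) :
    loopHi x z m n i = loopLo x z m n (i + 1) := by
  unfold loopLo loopHi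
  split_ifs <;> first | omega | rfl | (congr 1; omega)

theorem loopHi_succ_eq_loopLo (hn : 0 < n) {i : ℕ} (hi : n + 1 ≤ i) (him : i < m + n) :
    loopHi x z m n (i + 1) = loopLo x z m n i := by
  unfold loopLo loopHi
  split_ifs <;> first | omega | rfl | (congr 1; omega)

theorem isTypeL_iterate_of_itinerary (hx : IsTypeL f m n x) (hn : 2 ≤ n) (hz : IsFixedPt f z)
    (hz_lt : ∀ t ∈ Ioc z (x 0), t < f t) {w : ℝ} (hw : IsPeriodicPt f (m + n + 1) w)
    (hwI : ∀ j ≤ m + n + 1, f^[j] w ∈ Icc (loopLo x z m n j) (loopHi x z m n j)) :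
    IsTypeL f m (n + 1) (fun i => f^[i] w) := by
  have hw0 : w ∈ Icc z (x 0) := by simpa [loopLo, loopHi] using hwI 0 (by omega)
  have hw_fix : ¬IsFixedPt f w := by
    intro (h : IsFixedPt f w)
    have hw2 : f^[2] w ∈ Icc (x 0) (x 1) := by
      simpa (disch := omega) only [loopLo, loopHi, if_pos, if_neg, Nat.reduceSub] using
        hwI 2 (by omega)
    have : w = x 0 := le_antisymm hw0.2 ((h.iterate 2).symm ▸ hw2.1)
    exact (hx.lt_succ 0 (by omega)).ne (by rw [← hx.apply_of_lt (by omega), ← this, h, this])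
  have hne (i : ℕ) : f^[i] w ≠ f^[i + 1] w := fun h => hw_fix <|
    hw.isFixedPt_of_isFixedPt_iterate (by omega) ((iterate_succ_apply' f i w).symm.trans h.symm)
  have hzw : z < w := lt_of_le_of_ne hw0.1 fun h => hw_fix (h ▸ hz)
  refine ⟨fun i _ => ?_, fun i hi hi' => ?_, ?_, fun i hi => ?_⟩
  · change f (f^[i] w) = f^[(i + 1) % (m + n + 1)] w
    rw [hw.iterate_mod_apply, iterate_succ_apply']
  · refine lt_of_le_of_ne ?_ (hne i).symm
    calc f^[i + 1] w ≤ loopHi x z m n (i + 1) := (hwI (i + 1) (by omega)).2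
      _ = loopLo x z m n i := loopHi_succ_eq_loopLo (by omega) hi (by omega)
      _ ≤ f^[i] w := (hwI i (by omega)).1
  · calc f^[n + 1] w ≤ loopHi x z m n (n + 1) := (hwI (n + 1) (by omega)).2
      _ = z := by simp (disch := omega) only [loopHi, if_neg, if_true]
      _ < w := hzw
  · rcases i with _ | i
    · exact hz_lt w ⟨hzw, hw0.2⟩
    refine lt_of_le_of_ne ?_ (hne _)
    calc f^[i + 1] w ≤ loopHi x z m n (i + 1) := (hwI (i + 1) (by omega)).2
      _ = loopLo x z m n (i + 2) := loopHi_eq_loopLo_succ (by omega) (by omega)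
      _ ≤ f^[i + 2] w := (hwI (i + 2) (by omega)).1

theorem exists_isTypeL_succ (hf : Continuous f) (hx : IsTypeL f m n x) (hm : 2 ≤ m)
    (hn : 2 ≤ n) : ∃ y, IsTypeL f m (n + 1) y := by
  obtain ⟨z, ⟨hzn, hz0⟩, hz, hz_lt⟩ :=
    exists_isFixedPt_forall_Ioc_lt_apply hf.continuousOn hx.x_n_lt_x_zero.le
      ((hx.apply_of_lt (by omega)).trans_le (hx.succ_lt n le_rfl (by omega)).le)
      ((hx.lt_succ 0 (by omega)).trans_eq (hx.apply_of_lt (by omega)).symm)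
  obtain ⟨w, hw, hwI⟩ := exists_isPeriodicPt_itinerary_of_covers hf
    (fun j _ => hx.loopLo_le_loopHi hzn hz0 j) (fun j hj => hx.loop_covers hf hm hn hz hzn hz0 hj)
    (by simp (disch := omega) only [loopLo, if_pos, if_neg])
    (by simp (disch := omega) only [loopHi, if_pos, if_neg])
  exact ⟨_, hx.isTypeL_iterate_of_itinerary hn hz hz_lt hw hwI⟩

end IsTypeL

theorem stmt_3_general (f : ℝ → ℝ) (hf : Continuous f) (m n : ℕ) (hm : 2 ≤ m) (hn : 2 ≤ n)
    (x : ℕ → ℝ)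
    (hcyc : ∀ i < m + n, f (x i) = x ((i + 1) % (m + n)))
    (hdec : ∀ i, n ≤ i → i + 1 < m + n → x (i + 1) < x i)
    (hmid : x n < x 0)
    (hinc : ∀ i, i + 1 < n → x i < x (i + 1)) :
    ∃ y : ℕ → ℝ,
      (∀ i < m + n + 1, f (y i) = y ((i + 1) % (m + n + 1))) ∧
      (∀ i < m + n + 1, ∀ j < m + n + 1, y i = y j → i = j) ∧
      (∀ i, n + 1 ≤ i → i + 1 < m + n + 1 → y (i + 1) < y i) ∧
      y (n + 1) < y 0 ∧
      (∀ i, i + 1 < n + 1 → y i < y (i + 1)) := by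
  obtain ⟨y, hy⟩ := (IsTypeL.mk hcyc hdec hmid hinc).exists_isTypeL_succ hf hm hn
  exact ⟨y, hy.apply_eq, hy.injOn, hy.succ_lt, hy.x_n_lt_x_zero, hy.lt_succ⟩

theorem stmt_3 (f : ℝ → ℝ) (hf : Continuous f) (m n : ℕ) (hm : 2 ≤ m) (hn : 2 ≤ n)
    (x : ℕ → ℝ)
    (hcyc : ∀ i < m + n, f (x i) = x ((i + 1) % (m + n)))
    (hdist : ∀ i < m + n, ∀ j < m + n, x i = x j → i = j)
    (hdec : ∀ i, n ≤ i → i + 1 < m + n → x (i + 1) < x i)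
    (hmid : x n < x 0)
    (hinc : ∀ i, i + 1 < n → x i < x (i + 1)) :
    ∃ y : ℕ → ℝ,
      (∀ i < m + n + 1, f (y i) = y ((i + 1) % (m + n + 1))) ∧
      (∀ i < m + n + 1, ∀ j < m + n + 1, y i = y j → i = j) ∧
      (∀ i, n + 1 ≤ i → i + 1 < m + n + 1 → y (i + 1) < y i) ∧
      y (n + 1) < y 0 ∧
      (∀ i, i + 1 < n + 1 → y i < y (i + 1)) :=
  stmt_3_general f hf m n hm hn x hcyc hdec hmid hinc
end

section
/- If f : ℝ → ℝ is continuous and has a periodic orbit of period m+n of type L(m,n) (points x₀,...,x_{m+n-1} with x_{i+1}=f(x_i) cyclically and x_{m+n-1} < ⋯ < x_n < x₀ < x₁ < ⋯ < x_{n-1}), where m,n ≥ 2, then f has a periodic orbit of period m+n+1 of type L(m+1,n), i.e., points y₀,...,y_{m+n} with y_{m+n} < ⋯ < y_n < y₀ < y₁ < ⋯ < y_{n-1}. -/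
/-!
Let `c ∈ (x_n, x₀)` be a fixed point of `f` and `s ∈ (x_n, c)` a point with `f s = x_n`; both
exist by the intermediate value theorem. In the loop of intervals
`[c, x₀] → [x₀, x₁] → ⋯ → [x_{n-2}, x_{n-1}] → [s, c] → [x_n, s] → [x_{n+1}, x_n] → ⋯ →
[x_{m+n-1}, x_{m+n-2}] → [c, x₀]` each interval is `f`-covered by its predecessor, so nested
subintervals give a point `z` with `f^[m+n+1] z = z` whose orbit follows the loop. Both `c` and
the points `x_k` have periods dividing `m + n`, coprime to `m + n + 1`, so meeting them would make
`z` a fixed point, which it is not. Hence the orbit of `z` stays off the shared endpoints of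
consecutive intervals, and the order of the intervals is the order `L(m + 1, n)`.
-/

open Set Function

lemma surjOn_Icc_of_apply_le_of_le_apply {f : ℝ → ℝ} {a b c d u v : ℝ}
    (hf : ContinuousOn f (Icc a b)) (hu : u ∈ Icc a b) (hv : v ∈ Icc a b) (hfu : f u ≤ c)
    (hfv : d ≤ f v) : SurjOn f (Icc a b) (Icc c d) := fun _ hy =>
  image_mono (uIcc_subset_Icc hu hv) <| intermediate_value_uIcc (hf.mono (uIcc_subset_Icc hu hv))
    (Icc_subset_uIcc ⟨hfu.trans hy.1, hy.2.trans hfv⟩)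

lemma exists_Icc_image_eq_of_le {g : ℝ → ℝ} {u v : ℝ} (hg : ContinuousOn g (Icc u v))
    (huv : u ≤ v) (hguv : g u ≤ g v) :
    ∃ a b, u ≤ a ∧ a ≤ b ∧ b ≤ v ∧ g '' Icc a b = Icc (g u) (g v) := by
  have hlevel : ∀ {w : ℝ} (y : ℝ), w ≤ v → IsCompact (Icc u w ∩ g ⁻¹' {y}) := fun y hw =>
    isCompact_Icc.of_isClosed_subset
      ((hg.mono (Icc_subset_Icc_right hw)).preimage_isClosed_of_isClosed isClosed_Icc
        isClosed_singleton) inter_subset_left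
  -- `b` is the first time `g` reaches `g v`, and `a` the last time before `b` that it equals `g u`.
  obtain ⟨b, ⟨⟨hub, hbv⟩, hgb : g b = g v⟩, hb⟩ :=
    (hlevel (g v) le_rfl).exists_isLeast ⟨v, ⟨huv, le_rfl⟩, rfl⟩
  obtain ⟨a, ⟨⟨hua, hab⟩, hga : g a = g u⟩, ha⟩ :=
    (hlevel (g u) hbv).exists_isGreatest ⟨u, ⟨le_rfl, hub⟩, rfl⟩
  have hgab : ContinuousOn g (Icc a b) := hg.mono (Icc_subset_Icc hua hbv)
  refine ⟨a, b, hua, hab, hbv, Subset.antisymm ?_ (hga ▸ hgb ▸ intermediate_value_Icc hab hgab)⟩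
  rintro _ ⟨t, ⟨hat, htb⟩, rfl⟩
  constructor
  · by_contra! h
    obtain ⟨t', ⟨htt', ht'b⟩, hgt'⟩ :=
      intermediate_value_Icc htb (hgab.mono (Icc_subset_Icc_left hat)) ⟨h.le, hgb ▸ hguv⟩
    have : t' ≤ a := ha ⟨⟨hua.trans (hat.trans htt'), ht'b⟩, hgt'⟩
    obtain rfl : t = a := by linarith
    exact h.ne hga
  · by_contra! h
    obtain ⟨t', ⟨hut', ht't⟩, hgt'⟩ :=
      intermediate_value_Icc (hua.trans hat) (hg.mono (Icc_subset_Icc_right (htb.trans hbv)))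
        ⟨hguv, h.le⟩
    have : b ≤ t' := hb ⟨⟨hut', ht't.trans (htb.trans hbv)⟩, hgt'⟩
    obtain rfl : t = b := by linarith
    exact h.ne' hgb

lemma exists_Icc_subset_image_eq_of_surjOn {g : ℝ → ℝ} {a b c d : ℝ}
    (hg : ContinuousOn g (Icc a b)) (hcd : c ≤ d) (h : SurjOn g (Icc a b) (Icc c d)) :
    ∃ a' b', a' ≤ b' ∧ Icc a' b' ⊆ Icc a b ∧ g '' Icc a' b' = Icc c d := by
  obtain ⟨u, hu, rfl⟩ := h (left_mem_Icc.2 hcd)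
  obtain ⟨v, hv, rfl⟩ := h (right_mem_Icc.2 hcd)
  rcases le_total u v with huv | hvu
  · obtain ⟨a', b', hua', hab', hbv', himg⟩ :=
      exists_Icc_image_eq_of_le (hg.mono (Icc_subset_Icc hu.1 hv.2)) huv hcd
    exact ⟨a', b', hab', Icc_subset_Icc (hu.1.trans hua') (hbv'.trans hv.2), himg⟩
  · -- run through `[v, u]` backwards
    have hneg : ContinuousOn (g ∘ Neg.neg) (Icc (-u) (-v)) :=
      (hg.mono (Icc_subset_Icc hv.1 hu.2)).comp continuousOn_neg fun t ht =>
        ⟨le_neg.1 ht.2, neg_le.1 ht.1⟩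
    obtain ⟨a', b', hua', hab', hbv', himg⟩ :=
      exists_Icc_image_eq_of_le hneg (neg_le_neg hvu) (by simpa using hcd)
    refine ⟨-b', -a', neg_le_neg hab', Icc_subset_Icc ?_ ?_, ?_⟩
    · linarith [hv.1]
    · linarith [hu.2]
    · rw [← image_neg_Icc, ← image_comp]
      simpa using himg

theorem exists_isPeriodicPt_of_surjOn_loop {f : ℝ → ℝ} (hf : Continuous f) {lo hi : ℕ → ℝ}
    {N : ℕ} (hle : ∀ i ≤ N, lo i ≤ hi i)
    (hsurj : ∀ i < N, SurjOn f (Icc (lo i) (hi i)) (Icc (lo (i + 1)) (hi (i + 1))))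
    (hloop : SurjOn f (Icc (lo N) (hi N)) (Icc (lo 0) (hi 0))) :
    ∃ z, IsPeriodicPt f (N + 1) z ∧ ∀ i ≤ N, f^[i] z ∈ Icc (lo i) (hi i) := by
  have hshrink : ∀ k ≤ N, ∃ a b, a ≤ b ∧ Icc a b ⊆ Icc (lo 0) (hi 0) ∧
      (∀ i ≤ k, MapsTo f^[i] (Icc a b) (Icc (lo i) (hi i))) ∧
      f^[k] '' Icc a b = Icc (lo k) (hi k) := by
    intro k hk
    induction k with
    | zero =>
      refine ⟨lo 0, hi 0, hle 0 hk, subset_rfl, fun i hi0 => ?_, image_id _⟩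
      obtain rfl := Nat.le_zero.1 hi0
      exact mapsTo_id _
    | succ k ih =>
      obtain ⟨a, b, -, hsub, hmaps, himg⟩ := ih (by omega)
      have hsurj' : SurjOn f^[k + 1] (Icc a b) (Icc (lo (k + 1)) (hi (k + 1))) := by
        rw [iterate_succ']
        exact (hsurj k (by omega)).comp (himg ▸ surjOn_image _ _)
      obtain ⟨a', b', hab', hsub', himg'⟩ :=
        exists_Icc_subset_image_eq_of_surjOn (hf.iterate _).continuousOn (hle _ hk) hsurj'
      refine ⟨a', b', hab', hsub'.trans hsub, fun i hik => ?_, himg'⟩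
      rcases hik.lt_or_eq with hik | rfl
      · exact (hmaps i (by omega)).mono_left hsub'
      · exact himg' ▸ mapsTo_image _ _
  obtain ⟨a, b, hab, hsub, hmaps, himg⟩ := hshrink N le_rfl
  have hself : SurjOn f^[N + 1] (Icc a b) (Icc a b) := by
    rw [iterate_succ']
    exact (hloop.comp (himg ▸ surjOn_image _ _)).mono subset_rfl hsub
  obtain ⟨z, hz, hfz⟩ := exists_mem_Icc_isFixedPt_of_surjOn (hf.iterate _).continuousOn hab hself
  exact ⟨z, hfz, fun i hi => hmaps i hi hz⟩

theorem Function.IsPeriodicPt.isFixedPt_of_isPeriodicPt_iterate {α : Type*} {f : α → α} {z : α}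
    {N i : ℕ} (hz : IsPeriodicPt f (N + 1) z) (h : IsPeriodicPt f N (f^[i] z)) :
    IsFixedPt f z := by
  have hfix : IsPeriodicPt f 1 (f^[i] z) := by
    simpa using h.gcd (hz.apply_iterate i)
  rw [← minimalPeriod_eq_one_iff_isFixedPt,
    ← minimalPeriod_apply_iterate (mk_mem_periodicPts N.succ_pos hz) i]
  exact minimalPeriod_eq_one_iff_isFixedPt.2 hfix

lemma iterate_apply_eq_mod {α : Type*} {f : α → α} {x : ℕ → α} {N : ℕ}
    (hx : ∀ i < N, f (x i) = x ((i + 1) % N)) (t : ℕ) {k : ℕ} (hk : k < N) :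
    f^[t] (x k) = x ((k + t) % N) := by
  induction t with
  | zero => simp [Nat.mod_eq_of_lt hk]
  | succ t ih =>
    rw [iterate_succ_apply', ih, hx _ (Nat.mod_lt _ (by omega)), Nat.mod_add_mod, Nat.add_assoc]

/-- `x 0, …, x (N - 1)` is a period-`N` orbit of `f` of type `L(N - n, n)`:
`x (N - 1) < ⋯ < x n < x 0 < x 1 < ⋯ < x (n - 1)`. -/
structure IsTypeLOrbit {α : Type*} [LinearOrder α] (f : α → α) (n N : ℕ) (x : ℕ → α) : Prop where
  apply_eq : ∀ i < N, f (x i) = x ((i + 1) % N)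
  decreasing : ∀ i, n ≤ i → i + 1 < N → x (i + 1) < x i
  mid : x n < x 0
  increasing : ∀ i, i + 1 < n → x i < x (i + 1)

namespace IsTypeLOrbit

variable {α : Type*} [LinearOrder α] {f : α → α} {n N : ℕ} {x : ℕ → α}

lemma ne_zero (hx : IsTypeLOrbit f n N x) : n ≠ 0 := by
  rintro rfl
  exact hx.mid.false

lemma strictMonoOn (hx : IsTypeLOrbit f n N x) : StrictMonoOn x (Iio n) :=
  strictMonoOn_of_lt_add_one ordConnected_Iio fun i _ _ hi => hx.increasing i hi

lemma strictAntiOn (hx : IsTypeLOrbit f n N x) : StrictAntiOn x (Ico n N) :=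
  strictAntiOn_of_add_one_lt ordConnected_Ico fun i _ hi hi' => hx.decreasing i hi.1 hi'.2

lemma injOn (hx : IsTypeLOrbit f n N x) : InjOn x (Iio N) := by
  have hlt : ∀ i j, i < j → j < N → x i ≠ x j := by
    intro i j hij hj
    rcases lt_or_ge j n with hjn | hnj
    · exact (hx.strictMonoOn (hij.trans hjn) hjn hij).ne
    rcases lt_or_ge i n with hin | hni
    · have h0i : x 0 ≤ x i :=
        hx.strictMonoOn.monotoneOn (show 0 < n by omega) hin (Nat.zero_le i)
      have hjn : x j ≤ x n := hx.strictAntiOn.antitoneOn ⟨le_rfl, by omega⟩ ⟨hnj, hj⟩ hnj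
      exact (hjn.trans_lt (hx.mid.trans_le h0i)).ne'
    · exact (hx.strictAntiOn ⟨hni, by omega⟩ ⟨by omega, hj⟩ hij).ne'
  intro i hi j hj hij
  by_contra hne
  rcases lt_or_gt_of_ne hne with h | h
  · exact hlt i j h hj hij
  · exact hlt j i h hi hij.symm

lemma apply_of_succ_lt (hx : IsTypeLOrbit f n N x) {k : ℕ} (hk : k + 1 < N) :
    f (x k) = x (k + 1) := by
  rw [hx.apply_eq k (by omega), Nat.mod_eq_of_lt hk]

lemma apply_of_succ_eq (hx : IsTypeLOrbit f n N x) {k : ℕ} (hk : k + 1 = N) :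
    f (x k) = x 0 := by
  rw [hx.apply_eq k (by omega), hk, Nat.mod_self]

lemma isPeriodicPt (hx : IsTypeLOrbit f n N x) {k : ℕ} (hk : k < N) :
    IsPeriodicPt f N (x k) := by
  rw [IsPeriodicPt, IsFixedPt, iterate_apply_eq_mod hx.apply_eq N hk, Nat.add_mod_right,
    Nat.mod_eq_of_lt hk]

end IsTypeLOrbit

/-- The intervals `[loopLo x n c s i, loopHi x n c s i]`, `i = 0, …, N`, are `[c, x₀], [x₀, x₁],
…, [x_{n-2}, x_{n-1}], [s, c], [x_n, s], [x_{n+1}, x_n], …, [x_{N-1}, x_{N-2}]`. -/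
def loopLo (x : ℕ → ℝ) (n : ℕ) (c s : ℝ) (i : ℕ) : ℝ :=
  if i = 0 then c else if i = n then s else x (i - 1)

def loopHi (x : ℕ → ℝ) (n : ℕ) (c s : ℝ) (i : ℕ) : ℝ :=
  if i < n then x i else if i = n then c else if i = n + 1 then s else x (i - 2)

section Loop

variable {x : ℕ → ℝ} {n i : ℕ} {c s : ℝ}

lemma loopLo_zero : loopLo x n c s 0 = c := if_pos rfl

lemma loopLo_self (hn : n ≠ 0) : loopLo x n c s n = s := by simp [loopLo, hn]

lemma loopLo_succ (hi : i + 1 ≠ n) : loopLo x n c s (i + 1) = x i := by simp [loopLo, hi]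

lemma loopHi_of_lt (hi : i < n) : loopHi x n c s i = x i := if_pos hi

lemma loopHi_self : loopHi x n c s n = c := by simp [loopHi]

lemma loopHi_succ_self : loopHi x n c s (n + 1) = s := by simp [loopHi]

lemma loopHi_add_two (hi : n ≤ i) : loopHi x n c s (i + 2) = x i := by
  simp [loopHi, show ¬ i + 2 < n by omega, show i + 2 ≠ n by omega, show i + 2 ≠ n + 1 by omega]

end Loop

namespace IsTypeLOrbit

variable {f : ℝ → ℝ} {n N : ℕ} {x : ℕ → ℝ} {c s : ℝ}

lemma exists_isFixedPt_mem_Ioo (hx : IsTypeLOrbit f n N x) (hf : Continuous f) (hn : 2 ≤ n)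
    (hnN : n + 1 < N) : ∃ c ∈ Ioo (x n) (x 0), IsFixedPt f c := by
  have hx0 : x 0 < f (x 0) := by
    rw [hx.apply_of_succ_lt (by omega)]
    exact hx.increasing 0 (by omega)
  have hxn : f (x n) < x n := by
    rw [hx.apply_of_succ_lt hnN]
    exact hx.decreasing n le_rfl hnN
  obtain ⟨c, hc, hfc⟩ := intermediate_value_Ioo hx.mid.le (hf.sub continuous_id).continuousOn
    ⟨sub_neg.2 hxn, sub_pos.2 hx0⟩
  exact ⟨c, hc, sub_eq_zero.1 hfc⟩

lemma loopLo_le_loopHi (hx : IsTypeLOrbit f n N x) (hc : c ∈ Ioo (x n) (x 0))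
    (hs : s ∈ Ioo (x n) c) {i : ℕ} (hi : i ≤ N) : loopLo x n c s i ≤ loopHi x n c s i := by
  rcases Nat.lt_or_ge i n with hin | hni
  · rcases i with _ | k
    · rw [loopLo_zero, loopHi_of_lt hin]
      exact hc.2.le
    · rw [loopLo_succ hin.ne, loopHi_of_lt hin]
      exact (hx.increasing k hin).le
  obtain hin | hin | hi2 : i = n ∨ i = n + 1 ∨ n + 2 ≤ i := by omega
  · rw [hin, loopLo_self hx.ne_zero, loopHi_self]
    exact hs.2.le
  · rw [hin, loopLo_succ (by omega), loopHi_succ_self]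
    exact hs.1.le
  · obtain ⟨k, rfl⟩ : ∃ k, i = k + 2 := ⟨i - 2, by omega⟩
    rw [loopLo_succ (by omega), loopHi_add_two (by omega)]
    exact (hx.decreasing k (by omega) (by omega)).le

lemma surjOn_loop_of_lt (hx : IsTypeLOrbit f n N x) (hf : Continuous f) (hn : 2 ≤ n)
    (hnN : n < N) (hc : c ∈ Ioo (x n) (x 0)) (hfc : f c = c) (hs : s ∈ Ioo (x n) c) {i : ℕ}
    (hin : i < n) :
    SurjOn f (Icc (loopLo x n c s i) (loopHi x n c s i))
      (Icc (loopLo x n c s (i + 1)) (loopHi x n c s (i + 1))) := by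
  have hle := hx.loopLo_le_loopHi hc hs (hin.trans hnN).le
  have hlo := left_mem_Icc.2 hle
  have hhi := right_mem_Icc.2 hle
  rcases Nat.lt_or_ge (i + 1) n with hin' | hni
  · refine surjOn_Icc_of_apply_le_of_le_apply hf.continuousOn hlo hhi ?_ ?_
    · rcases i with _ | k
      · rw [loopLo_zero, hfc, loopLo_succ hin'.ne]
        exact hc.2.le
      · rw [loopLo_succ hin.ne, loopLo_succ hin'.ne, hx.apply_of_succ_lt (k := k) (by omega)]
    · rw [loopHi_of_lt hin', loopHi_of_lt hin, hx.apply_of_succ_lt (k := i) (by omega)]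
  · obtain ⟨k, rfl⟩ : ∃ k, i = k + 1 := ⟨i - 1, by omega⟩
    refine surjOn_Icc_of_apply_le_of_le_apply hf.continuousOn hhi hlo ?_ ?_
    · rw [loopHi_of_lt hin, hx.apply_of_succ_lt (by omega), show k + 1 + 1 = n by omega,
        loopLo_self hx.ne_zero]
      exact hs.1.le
    · rw [loopLo_succ hin.ne, hx.apply_of_succ_lt (by omega), show k + 1 + 1 = n by omega,
        loopHi_self]
      exact (hc.2.trans_le
        (hx.strictMonoOn.monotoneOn (show 0 < n by omega) hin (Nat.zero_le _))).le

lemma surjOn_loop_of_le (hx : IsTypeLOrbit f n N x) (hf : Continuous f)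
    (hc : c ∈ Ioo (x n) (x 0)) (hfc : f c = c) (hs : s ∈ Ioo (x n) c) (hfs : f s = x n)
    {i : ℕ} (hni : n ≤ i) (hi : i < N) :
    SurjOn f (Icc (loopLo x n c s i) (loopHi x n c s i))
      (Icc (loopLo x n c s (i + 1)) (loopHi x n c s (i + 1))) := by
  have hle := hx.loopLo_le_loopHi hc hs hi.le
  have hlo := left_mem_Icc.2 hle
  have hhi := right_mem_Icc.2 hle
  obtain rfl | rfl | hi2 : i = n ∨ i = n + 1 ∨ n + 2 ≤ i := by omega
  · refine surjOn_Icc_of_apply_le_of_le_apply hf.continuousOn hlo hhi ?_ ?_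
    · rw [loopLo_self hx.ne_zero, hfs, loopLo_succ (by omega)]
    · rw [loopHi_self, hfc, loopHi_succ_self]
      exact hs.2.le
  · refine surjOn_Icc_of_apply_le_of_le_apply hf.continuousOn hlo hhi ?_ ?_
    · rw [loopLo_succ (by omega), loopLo_succ (by omega), hx.apply_of_succ_lt hi]
    · rw [loopHi_succ_self, hfs, loopHi_add_two le_rfl]
  · obtain ⟨k, rfl⟩ : ∃ k, i = k + 2 := ⟨i - 2, by omega⟩
    refine surjOn_Icc_of_apply_le_of_le_apply hf.continuousOn hlo hhi ?_ ?_
    · rw [loopLo_succ (by omega), loopLo_succ (by omega), hx.apply_of_succ_lt hi]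
    · rw [loopHi_add_two (i := k + 1) (by omega), loopHi_add_two (i := k) (by omega),
        hx.apply_of_succ_lt (k := k) (by omega)]

lemma surjOn_loop_last (hx : IsTypeLOrbit f n N x) (hf : Continuous f) (hnN : n + 2 ≤ N)
    (hc : c ∈ Ioo (x n) (x 0)) (hs : s ∈ Ioo (x n) c) :
    SurjOn f (Icc (loopLo x n c s N) (loopHi x n c s N))
      (Icc (loopLo x n c s 0) (loopHi x n c s 0)) := by
  obtain ⟨k, rfl⟩ : ∃ k, N = k + 2 := ⟨N - 2, by omega⟩
  have hle := hx.loopLo_le_loopHi hc hs le_rfl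
  refine surjOn_Icc_of_apply_le_of_le_apply hf.continuousOn (right_mem_Icc.2 hle)
    (left_mem_Icc.2 hle) ?_ ?_
  · rw [loopHi_add_two (i := k) (by omega), hx.apply_of_succ_lt (k := k) (by omega), loopLo_zero]
    exact (hx.strictAntiOn.antitoneOn ⟨le_rfl, by omega⟩ ⟨by omega, by omega⟩ (by omega)).trans
      hc.1.le
  · rw [loopLo_succ (i := k + 1) (by omega), loopHi_of_lt (Nat.pos_of_ne_zero hx.ne_zero),
      hx.apply_of_succ_eq rfl]

end IsTypeLOrbit

lemma isTypeLOrbit_of_mem_loop {f : ℝ → ℝ} {n N : ℕ} {x y : ℕ → ℝ} {c s : ℝ} (hn : n ≠ 0)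
    (hnN : n ≤ N) (hy : ∀ i < N + 1, f (y i) = y ((i + 1) % (N + 1)))
    (hyK : ∀ i ≤ N, y i ∈ Icc (loopLo x n c s i) (loopHi x n c s i))
    (hyx : ∀ i ≤ N, ∀ k < N, y i ≠ x k) (hyc : ∀ i ≤ N, y i ≠ c) (hys : y n ≠ s) :
    IsTypeLOrbit f n (N + 1) y where
  apply_eq := hy
  decreasing i hni hi := by
    have h1 := (hyK (i + 1) (by omega)).2
    have h0 := (hyK i (by omega)).1
    rcases hni.eq_or_lt with rfl | hni
    · rw [loopHi_succ_self] at h1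
      rw [loopLo_self hn] at h0
      exact h1.trans_lt (h0.lt_of_ne' hys)
    · obtain ⟨k, rfl⟩ : ∃ k, i = k + 1 := ⟨i - 1, by omega⟩
      rw [loopHi_add_two (by omega)] at h1
      rw [loopLo_succ (by omega)] at h0
      exact h1.trans_lt (h0.lt_of_ne' (hyx _ (by omega) k (by omega)))
  mid := by
    have hn' := (hyK n hnN).2
    have h0 := (hyK 0 (Nat.zero_le _)).1
    rw [loopHi_self] at hn'
    rw [loopLo_zero] at h0
    exact (hn'.lt_of_ne (hyc n hnN)).trans_le h0
  increasing i hi := by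
    have h0 := (hyK i (by omega)).2
    have h1 := (hyK (i + 1) (by omega)).1
    rw [loopHi_of_lt (by omega)] at h0
    rw [loopLo_succ hi.ne] at h1
    exact (h0.lt_of_ne (hyx i (by omega) i (by omega))).trans_le h1

theorem IsTypeLOrbit.exists_isTypeLOrbit_succ {f : ℝ → ℝ} {n N : ℕ} {x : ℕ → ℝ}
    (hx : IsTypeLOrbit f n N x) (hf : Continuous f) (hn : 2 ≤ n) (hnN : n + 2 ≤ N) :
    ∃ y, IsTypeLOrbit f n (N + 1) y := by
  obtain ⟨c, hc, hfc⟩ := hx.exists_isFixedPt_mem_Ioo hf hn (by omega)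
  have hfxn : f (x n) = x (n + 1) := hx.apply_of_succ_lt (by omega)
  obtain ⟨s, hs, hfs⟩ : ∃ s ∈ Ioo (x n) c, f s = x n :=
    intermediate_value_Ioo hc.1.le hf.continuousOn
      ⟨hfxn ▸ hx.decreasing n le_rfl (by omega), hfc.symm ▸ hc.1⟩
  obtain ⟨z, hz, hzK⟩ := exists_isPeriodicPt_of_surjOn_loop hf
    (fun i hi => hx.loopLo_le_loopHi hc hs hi)
    (fun i hi => (lt_or_ge i n).elim (hx.surjOn_loop_of_lt hf hn (by omega) hc hfc hs)
      (hx.surjOn_loop_of_le hf hc hfc hs hfs · hi))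
    (hx.surjOn_loop_last hf hnN hc hs)
  -- `[c, x₀]` and `[x₀, x₁]` only share `x₀`, which is not fixed
  have hz_fix : ¬ IsFixedPt f z := by
    intro hfix
    have h0 := hzK 0 (Nat.zero_le _)
    have h1 := hzK 1 (by omega)
    rw [loopHi_of_lt (by omega)] at h0
    rw [iterate_one, hfix, loopLo_succ (by omega)] at h1
    have hx0 : f (x 0) = x 0 := le_antisymm h0.2 h1.1 ▸ hfix
    exact (hx.increasing 0 (by omega)).ne' (hx.apply_of_succ_lt (k := 0) (by omega) ▸ hx0)
  have hz_avoid : ∀ i p, IsPeriodicPt f N p → f^[i] z ≠ p := fun i p hp h =>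
    hz_fix (hz.isFixedPt_of_isPeriodicPt_iterate (h ▸ hp))
  refine ⟨fun i => f^[i] z, isTypeLOrbit_of_mem_loop hx.ne_zero (by omega) (fun i _ => ?_) hzK
    (fun i _ k hk => hz_avoid i _ (hx.isPeriodicPt hk))
    (fun i _ => hz_avoid i c (hfc.isPeriodicPt N))
    fun h => hz_avoid (n + 1) (x n) (hx.isPeriodicPt (by omega)) ?_⟩
  · rw [← iterate_succ_apply' f i z, hz.iterate_mod_apply]
  · rw [iterate_succ_apply', h, hfs]

theorem stmt_4_general (f : ℝ → ℝ) (hf : Continuous f) (m n : ℕ) (hm : 2 ≤ m) (hn : 2 ≤ n)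
    (x : ℕ → ℝ)
    (hcyc : ∀ i < m + n, f (x i) = x ((i + 1) % (m + n)))
    (hdec : ∀ i, n ≤ i → i + 1 < m + n → x (i + 1) < x i)
    (hmid : x n < x 0)
    (hinc : ∀ i, i + 1 < n → x i < x (i + 1)) :
    ∃ y : ℕ → ℝ,
      (∀ i < m + n + 1, f (y i) = y ((i + 1) % (m + n + 1))) ∧
      (∀ i < m + n + 1, ∀ j < m + n + 1, y i = y j → i = j) ∧
      (∀ i, n ≤ i → i + 1 < m + n + 1 → y (i + 1) < y i) ∧
      y n < y 0 ∧
      (∀ i, i + 1 < n → y i < y (i + 1)) := by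
  obtain ⟨y, hy⟩ :=
    (IsTypeLOrbit.mk hcyc hdec hmid hinc).exists_isTypeLOrbit_succ hf hn (by omega)
  exact ⟨y, hy.apply_eq, fun i hi j hj => hy.injOn hi hj, hy.decreasing, hy.mid,
    hy.increasing⟩

theorem stmt_4 (f : ℝ → ℝ) (hf : Continuous f) (m n : ℕ) (hm : 2 ≤ m) (hn : 2 ≤ n)
    (x : ℕ → ℝ)
    (hcyc : ∀ i < m + n, f (x i) = x ((i + 1) % (m + n)))
    (hdist : ∀ i < m + n, ∀ j < m + n, x i = x j → i = j)
    (hdec : ∀ i, n ≤ i → i + 1 < m + n → x (i + 1) < x i)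
    (hmid : x n < x 0)
    (hinc : ∀ i, i + 1 < n → x i < x (i + 1)) :
    ∃ y : ℕ → ℝ,
      (∀ i < m + n + 1, f (y i) = y ((i + 1) % (m + n + 1))) ∧
      (∀ i < m + n + 1, ∀ j < m + n + 1, y i = y j → i = j) ∧
      (∀ i, n ≤ i → i + 1 < m + n + 1 → y (i + 1) < y i) ∧
      y n < y 0 ∧
      (∀ i, i + 1 < n → y i < y (i + 1)) :=
  stmt_4_general f hf m n hm hn x hcyc hdec hmid hinc
end

section
/- If f : ℝ → ℝ is continuous and has a periodic orbit of period m+n of type L(m,n) with m,n ≥ 2, then f has a fixed point z₀ admitting a backward orbit (z_{-i})_{i≥0} (f(z_{-i-1}) = z_{-i}, z_0 = z₀) satisfying z_{-1} < z_{-2} < ⋯ < z_{-m} < z₀ and z₀ < z_{-i} < z_{-i+1} for all i ≥ m+1 (i.e., type L(m,∞)). -/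
/-!
Let `z₀` be the largest fixed point of `f` in `[x_n, x_0]`; it exists because `f x_n < x_n` and
`f x_0 > x_0`, and by maximality `f y > y` on `(z₀, x_0]`. The points `a_j = x_{m+n-j}` (`1 ≤ j ≤ m`) increase
towards `z₀`, `f` shifts them down (`f a_{j+1} = a_j`) and `f a_1 = x_0 > z₀`. By the intermediate
value theorem `z₀` has a preimage in `(a_1, a_2)`, that one has a preimage in `(a_2, a_3)`, and so
on up to `(a_{m-1}, a_m)`; as `f z₀ = z₀` the next preimage lies in `(a_m, z₀)`, and as
`f x_{n-1} = x_n` the one after it in `(z₀, x_{n-1})`. Finally every `t ∈ (z₀, x_{n-1}]` has a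
preimage in `(z₀, t)`: either `t ≤ x_0` and `f t > t`, or `x_k < t ≤ x_{k+1} = f x_k` for some `k`.
Iterating the last step gives the decreasing tail above `z₀`.
-/

open Set

theorem exists_seq_of_exists_succ {α : Type*} (P : ℕ → α → Prop) (R : ℕ → α → α → Prop) {a : α}
    (h0 : P 0 a) (hsucc : ∀ k t, P k t → ∃ w, P (k + 1) w ∧ R k w t) :
    ∃ z : ℕ → α, z 0 = a ∧ ∀ k, P k (z k) ∧ R k (z (k + 1)) (z k) := by
  choose g hgP hgR using hsucc
  let s : (k : ℕ) → {t // P k t} :=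
    fun k => Nat.rec ⟨a, h0⟩ (fun k t => ⟨g k t t.2, hgP k t t.2⟩) k
  exact ⟨fun k => (s k).1, rfl, fun k => ⟨(s k).2, hgR k _ (s k).2⟩⟩

theorem exists_lt_le_succ_of_lt_of_le {α : Type*} [LinearOrder α] {u : ℕ → α} {t : α} {N : ℕ}
    (h0 : u 0 < t) (hN : t ≤ u N) : ∃ k < N, u k < t ∧ t ≤ u (k + 1) := by
  induction N with
  | zero => exact absurd hN h0.not_ge
  | succ N ih =>
    by_cases htN : t ≤ u N
    · obtain ⟨k, hk, hkt⟩ := ih htN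
      exact ⟨k, hk.trans N.lt_succ_self, hkt⟩
    · exact ⟨N, N.lt_succ_self, not_le.1 htN, hN⟩

theorem exists_fixedPt_forall_lt_apply {f : ℝ → ℝ} (hf : Continuous f) {a b : ℝ} (hab : a ≤ b)
    (ha : f a < a) (hb : b < f b) : ∃ z ∈ Ioo a b, f z = z ∧ ∀ y ∈ Ioc z b, y < f y := by
  set S := {y ∈ Icc a b | f y ≤ y}
  have hS : IsCompact S := isCompact_Icc.inter_right (isClosed_le hf continuous_id)
  have hzS : sSup S ∈ S := hS.sSup_mem ⟨a, left_mem_Icc.2 hab, ha.le⟩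
  set z := sSup S
  have habove : ∀ y ∈ Ioc z b, y < f y := fun y hy => not_le.1 fun hfy =>
    hy.1.not_ge (le_csSup hS.bddAbove ⟨⟨hzS.1.1.trans hy.1.le, hy.2⟩, hfy⟩)
  have hfix : f z = z := by
    obtain ⟨w, hw, hfw⟩ : ∃ w ∈ Icc z b, f w - w = 0 :=
      intermediate_value_Icc hzS.1.2 (hf.sub continuous_id).continuousOn
        ⟨sub_nonpos.2 hzS.2, sub_nonneg.2 hb.le⟩
    have hwz : w ≤ z := le_csSup hS.bddAbove ⟨⟨hzS.1.1.trans hw.1, hw.2⟩, (sub_eq_zero.1 hfw).le⟩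
    rw [← le_antisymm hwz hw.1]
    exact sub_eq_zero.1 hfw
  refine ⟨z, ⟨lt_of_le_of_ne hzS.1.1 ?_, lt_of_le_of_ne hzS.1.2 ?_⟩, hfix, habove⟩
  · intro h; rw [← h] at hfix; exact ha.ne hfix
  · intro h; rw [h] at hfix; exact hb.ne' hfix

theorem exists_mem_Ioo_apply_eq_of_le_apply {f : ℝ → ℝ} (hf : Continuous f) {p s t : ℝ}
    (hp : f p = p) (hps : p < s) (hst : s ≤ t) (hs : s < f s) (ht : t ≤ f s) :
    ∃ w ∈ Ioo p t, f w = t := by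
  obtain ⟨w, hw, hfw⟩ := intermediate_value_Ioc hps.le hf.continuousOn
    (⟨hp.symm ▸ hps.trans_le hst, ht⟩ : t ∈ Ioc (f p) (f s))
  refine ⟨w, ⟨hw.1, lt_of_le_of_ne (hw.2.trans hst) ?_⟩, hfw⟩
  rintro rfl
  rw [le_antisymm hst hw.2] at hs
  exact hs.ne' hfw

theorem forall_exists_mem_Ioo_apply_eq {f : ℝ → ℝ} (hf : Continuous f) {p : ℝ} {u : ℕ → ℝ}
    {N : ℕ} (hp : f p = p) (hpu : p < u 0) (hu : StrictMonoOn u (Iic N))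
    (hfu : ∀ k < N, f (u k) = u (k + 1)) (habove : ∀ y ∈ Ioc p (u 0), y < f y) :
    ∀ t ∈ Ioc p (u N), ∃ w ∈ Ioo p t, f w = t := by
  rintro t ⟨hpt, htN⟩
  rcases le_or_gt t (u 0) with ht0 | ht0
  · have ht := habove t ⟨hpt, ht0⟩
    exact exists_mem_Ioo_apply_eq_of_le_apply hf hp hpt le_rfl ht ht.le
  · obtain ⟨k, hkN, hkt, htk⟩ := exists_lt_le_succ_of_lt_of_le ht0 htN
    have h0k : u 0 ≤ u k := hu.monotoneOn N.zero_le hkN.le k.zero_le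
    have hk : u k < u (k + 1) := hu hkN.le hkN k.lt_succ_self
    exact exists_mem_Ioo_apply_eq_of_le_apply hf hp (hpu.trans_le h0k) hkt.le
      (hfu k hkN ▸ hk) (hfu k hkN ▸ htk)

structure IsLInftyConfig (f : ℝ → ℝ) (m : ℕ) (p : ℝ) (a : ℕ → ℝ) (c : ℝ) : Prop where
  two_le : 2 ≤ m
  continuous : Continuous f
  map_fixed : f p = p
  chain_strictMonoOn : StrictMonoOn a (Icc 1 m)
  lt_fixed : a m < p
  fixed_lt_map_one : p < f (a 1)
  map_succ : ∀ j, 1 ≤ j → j < m → f (a (j + 1)) = a j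
  fixed_lt : p < c
  map_le : f c ≤ a m
  exists_preimage : ∀ t ∈ Ioc p c, ∃ w ∈ Ioo p t, f w = t

/-- The window in which the point `z_{-k}` of the backward orbit is chosen. -/
def LInftyWindow (m : ℕ) (p : ℝ) (a : ℕ → ℝ) (c : ℝ) (k : ℕ) (t : ℝ) : Prop :=
  (k = 0 ∧ t = p) ∨ (1 ≤ k ∧ k < m ∧ t ∈ Ioo (a k) (a (k + 1))) ∨ (k = m ∧ t ∈ Ioo (a m) p) ∨
    (m < k ∧ t ∈ Ioc p c)

namespace IsLInftyConfig

variable {f : ℝ → ℝ} {m : ℕ} {p c : ℝ} {a : ℕ → ℝ}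

theorem chain_lt (h : IsLInftyConfig f m p a c) {i j : ℕ} (hi : 1 ≤ i) (hij : i < j)
    (hj : j ≤ m) : a i < a j :=
  h.chain_strictMonoOn ⟨hi, by omega⟩ ⟨by omega, hj⟩ hij

theorem exists_window_succ (h : IsLInftyConfig f m p a c) {k : ℕ} {t : ℝ}
    (ht : LInftyWindow m p a c k t) :
    ∃ w, LInftyWindow m p a c (k + 1) w ∧ f w = t ∧ (m < k → w < t) := by
  have hf := h.continuous
  rcases ht with ⟨rfl, ht⟩ | ⟨hk, hkm, ht⟩ | ⟨rfl, ht⟩ | ⟨hmk, ht⟩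
  · have ha1 : a 1 < p := (h.chain_lt le_rfl h.two_le le_rfl).trans h.lt_fixed
    obtain ⟨w, hw, hfw⟩ :=
      intermediate_value_Ioo' (h.chain_lt le_rfl one_lt_two h.two_le).le hf.continuousOn
      (⟨h.map_succ 1 le_rfl h.two_le ▸ ha1, h.fixed_lt_map_one⟩ : p ∈ Ioo (f (a 2)) (f (a 1)))
    exact ⟨w, Or.inr (Or.inl ⟨le_rfl, h.two_le, hw⟩), hfw.trans ht.symm, by omega⟩
  · rcases (show k + 1 < m ∨ k + 1 = m by omega) with hk' | hk'
    · obtain ⟨w, hw, hfw⟩ := intermediate_value_Ioo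
        (h.chain_lt (i := k + 1) (j := k + 2) (by omega) (by omega) (by omega)).le hf.continuousOn
        (by rwa [h.map_succ k hk hkm, h.map_succ (k + 1) (by omega) hk'])
      exact ⟨w, Or.inr (Or.inl ⟨by omega, hk', hw⟩), hfw, by omega⟩
    · subst hk'
      obtain ⟨w, hw, hfw⟩ := intermediate_value_Ioo h.lt_fixed.le hf.continuousOn
        (⟨h.map_succ k hk hkm ▸ ht.1, h.map_fixed.symm ▸ ht.2.trans h.lt_fixed⟩ :
          t ∈ Ioo (f (a (k + 1))) (f p))
      exact ⟨w, Or.inr (Or.inr (Or.inl ⟨rfl, hw⟩)), hfw, by omega⟩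
  · obtain ⟨w, hw, hfw⟩ := intermediate_value_Ioo' h.fixed_lt.le hf.continuousOn
      (⟨h.map_le.trans_lt ht.1, h.map_fixed.symm ▸ ht.2⟩ : t ∈ Ioo (f c) (f p))
    exact ⟨w, Or.inr (Or.inr (Or.inr ⟨lt_add_one _, Ioo_subset_Ioc_self hw⟩)), hfw, by omega⟩
  · obtain ⟨w, hw, hfw⟩ := h.exists_preimage t ht
    exact ⟨w, Or.inr (Or.inr (Or.inr ⟨by omega, hw.1, hw.2.le.trans ht.2⟩)), hfw, fun _ => hw.2⟩

theorem exists_backward_orbit (h : IsLInftyConfig f m p a c) :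
    ∃ z : ℕ → ℝ,
      f (z 0) = z 0 ∧
      (∀ i, f (z (i + 1)) = z i) ∧
      (∀ i, 1 ≤ i → i + 1 ≤ m → z i < z (i + 1)) ∧
      z m < z 0 ∧
      (∀ i, m + 1 ≤ i → z 0 < z i) ∧
      (∀ i, m + 1 ≤ i → z (i + 1) < z i) := by
  obtain ⟨z, rfl, hz⟩ := exists_seq_of_exists_succ (LInftyWindow m p a c)
    (fun k w t => f w = t ∧ (m < k → w < t)) (Or.inl ⟨rfl, rfl⟩)
    fun _ _ ht => h.exists_window_succ ht
  have hm := h.two_le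
  have hlow : ∀ k, 1 ≤ k → k ≤ m → a k < z k := by
    intro k hk hkm
    rcases (hz k).1 with ⟨_, -⟩ | ⟨-, -, hzk, -⟩ | ⟨rfl, hzk, -⟩ | ⟨_, -⟩
    all_goals first | exact hzk | omega
  have hupp : ∀ k, 1 ≤ k → k < m → z k < a (k + 1) := by
    intro k hk hkm
    rcases (hz k).1 with ⟨_, -⟩ | ⟨-, -, -, hzk⟩ | ⟨_, -⟩ | ⟨_, -⟩
    all_goals first | exact hzk | omega
  refine ⟨z, h.map_fixed, fun i => (hz i).2.1,
    fun i hi him => (hupp i hi (by omega)).trans (hlow (i + 1) (by omega) him), ?_, ?_,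
    fun i hi => (hz i).2.2 (by omega)⟩
  · rcases (hz m).1 with ⟨_, -⟩ | ⟨-, _, -⟩ | ⟨-, -, hzm⟩ | ⟨_, -⟩
    all_goals first | exact hzm | omega
  · intro i hi
    rcases (hz i).1 with ⟨_, -⟩ | ⟨-, _, -⟩ | ⟨_, -⟩ | ⟨-, hzi, -⟩
    all_goals first | exact hzi | omega

end IsLInftyConfig

theorem stmt_5_general (f : ℝ → ℝ) (hf : Continuous f) (m n : ℕ) (hm : 2 ≤ m) (hn : 2 ≤ n)
    (x : ℕ → ℝ)
    (hcyc : ∀ i < m + n, f (x i) = x ((i + 1) % (m + n)))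
    (hdec : ∀ i, n ≤ i → i + 1 < m + n → x (i + 1) < x i)
    (hmid : x n < x 0)
    (hinc : ∀ i, i + 1 < n → x i < x (i + 1)) :
    ∃ z : ℕ → ℝ,
      f (z 0) = z 0 ∧
      (∀ i, f (z (i + 1)) = z i) ∧
      (∀ i, 1 ≤ i → i + 1 ≤ m → z i < z (i + 1)) ∧
      z m < z 0 ∧
      (∀ i, m + 1 ≤ i → z 0 < z i) ∧
      (∀ i, m + 1 ≤ i → z (i + 1) < z i) := by
  have hstep : ∀ i j, i + 1 = j → j < m + n → f (x i) = x j := by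
    rintro i j rfl hj
    simpa [Nat.mod_eq_of_lt hj] using hcyc i (by omega)
  have hlast : f (x (m + n - 1)) = x 0 := by
    simpa [Nat.sub_add_cancel (by omega : 1 ≤ m + n)] using hcyc (m + n - 1) (by omega)
  have hright : StrictMonoOn x (Iic (n - 1)) :=
    strictMonoOn_Iic_of_lt_succ fun i hi => hinc i (by omega)
  have hleft : StrictMonoOn (fun j => x (m + n - j)) (Icc 1 m) := by
    refine strictMonoOn_of_lt_add_one ordConnected_Icc fun j _ hj hj' => ?_
    rw [mem_Icc] at hj hj'
    have := hdec (m + n - (j + 1)) (by omega) (by omega)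
    rwa [show m + n - (j + 1) + 1 = m + n - j by omega] at this
  obtain ⟨z₀, hz₀, hfix, habove⟩ := exists_fixedPt_forall_lt_apply hf hmid.le
    (hstep n (n + 1) rfl (by omega) ▸ hdec n le_rfl (by omega))
    (hstep 0 1 rfl (by omega) ▸ hinc 0 (by omega))
  have hx0 : x 0 ≤ x (n - 1) := hright.monotoneOn (by simp) (by simp) (Nat.zero_le _)
  exact IsLInftyConfig.exists_backward_orbit (a := fun j => x (m + n - j)) (c := x (n - 1))
    { two_le := hm
      continuous := hf
      map_fixed := hfix
      chain_strictMonoOn := hleft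
      lt_fixed := by simpa using hz₀.1
      fixed_lt_map_one := hlast ▸ hz₀.2
      map_succ := fun j _ _ => hstep _ _ (by omega) (by omega)
      fixed_lt := hz₀.2.trans_le hx0
      map_le := by simp [hstep (n - 1) n (by omega) (by omega)]
      exists_preimage := forall_exists_mem_Ioo_apply_eq hf hfix hz₀.2 hright
        (fun k hk => hstep k (k + 1) rfl (by omega)) habove }

theorem stmt_5 (f : ℝ → ℝ) (hf : Continuous f) (m n : ℕ) (hm : 2 ≤ m) (hn : 2 ≤ n)
    (x : ℕ → ℝ)
    (hcyc : ∀ i < m + n, f (x i) = x ((i + 1) % (m + n)))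
    (hdist : ∀ i < m + n, ∀ j < m + n, x i = x j → i = j)
    (hdec : ∀ i, n ≤ i → i + 1 < m + n → x (i + 1) < x i)
    (hmid : x n < x 0)
    (hinc : ∀ i, i + 1 < n → x i < x (i + 1)) :
    ∃ z : ℕ → ℝ,
      f (z 0) = z 0 ∧
      (∀ i, f (z (i + 1)) = z i) ∧
      (∀ i, 1 ≤ i → i + 1 ≤ m → z i < z (i + 1)) ∧
      z m < z 0 ∧
      (∀ i, m + 1 ≤ i → z 0 < z i) ∧
      (∀ i, m + 1 ≤ i → z (i + 1) < z i) :=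
  stmt_5_general f hf m n hm hn x hcyc hdec hmid hinc
end

section
/- If f : ℝ → ℝ is continuous and has a fixed point z₀ with a backward orbit (z_{-i}) satisfying z_{-1} < z_{-2} < ⋯ < z_{-m} < z₀ < ⋯ < z_{-i} < z_{-i+1} < ⋯ < z_{-m-1} for some m ≥ 2 (type L(m,∞)), then f has a fixed point with a backward orbit of type L(m+1,∞), i.e., a fixed point w₀ with backward orbit (w_{-i}) satisfying w_{-1} < ⋯ < w_{-m-1} < w₀ and w₀ < w_{-j} < w_{-j+1} for all j ≥ m+2. -/
/-!
The tail `z_{-m-1} > z_{-m-2} > ⋯` of the orbit decreases to a limit `L ≥ z₀`, which is again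
a fixed point. By the intermediate value theorem some `c ∈ (z_{-m}, z₀)` has `f c = z_{-m}`, and
some `d ∈ (L, z_{-m-1})` has `f d = c`. Every `x ∈ (L, z_{-m-1})` lies in some
`(z_{-j-1}, z_{-j}]` and so has a preimage in `(z_{-j-2}, z_{-j-1}] ⊆ (L, x)`; iterating from `d`
gives a decreasing backward orbit above `L`, and `z₀, …, z_{-m}, c, d, …` is a backward orbit of
type `L(m+1,∞)`.
-/

open Set Filter Topology Function

theorem exists_seq_of_forall_exists {α : Type*} (P : α → Prop) (r : α → α → Prop)
    (step : ∀ x, P x → ∃ y, P y ∧ r y x) {a : α} (ha : P a) :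
    ∃ t : ℕ → α, t 0 = a ∧ ∀ n, P (t n) ∧ r (t (n + 1)) (t n) := by
  choose g hgP hgr using step
  let t : ℕ → {x // P x} := fun n => Nat.rec ⟨a, ha⟩ (fun _ x => ⟨g x x.2, hgP x x.2⟩) n
  exact ⟨fun n => (t n).1, rfl, fun n => ⟨(t n).2, hgr (t n).1 (t n).2⟩⟩

theorem isFixedPt_of_tendsto_of_backward {α : Type*} [TopologicalSpace α] [T2Space α]
    {f : α → α} {s : ℕ → α} {L : α} (hs : Tendsto s atTop (𝓝 L)) (hf : ContinuousAt f L)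
    (hback : ∀ n, f (s (n + 1)) = s n) : IsFixedPt f L :=
  tendsto_nhds_unique ((hf.tendsto.comp ((tendsto_add_atTop_iff_nat 1).2 hs)).congr hback) hs

theorem exists_succ_lt_le_of_tendsto {α : Type*} [LinearOrder α] [TopologicalSpace α]
    [OrderClosedTopology α] {s : ℕ → α} {L x : α} (hs : Tendsto s atTop (𝓝 L)) (hLx : L < x)
    (hx : x ≤ s 0) : ∃ n, s (n + 1) < x ∧ x ≤ s n := by
  by_contra! h
  have hge : ∀ n, x ≤ s n := fun n =>
    Nat.rec hx (fun n ih => not_lt.1 fun hlt => (h n hlt).not_ge ih) n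
  obtain ⟨n, hn⟩ := (hs.eventually_lt_const hLx).exists
  exact (hge n).not_gt hn

section BackwardOrbit

variable {α : Type*} [ConditionallyCompleteLinearOrder α] [TopologicalSpace α] [OrderTopology α]
  [DenselyOrdered α] {f : α → α} {s : ℕ → α} {L : α}

theorem exists_preimage_mem_Ioo_of_strictAnti (hf : Continuous f) (hs : StrictAnti s)
    (hback : ∀ n, f (s (n + 1)) = s n) (hL : Tendsto s atTop (𝓝 L)) {x : α}
    (hx : x ∈ Ioo L (s 0)) : ∃ y ∈ Ioo L x, f y = x := by
  obtain ⟨n, hnx, hxn⟩ := exists_succ_lt_le_of_tendsto hL hx.1 hx.2.le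
  have hx' : x ∈ Ioc (f (s (n + 2))) (f (s (n + 1))) := by rw [hback, hback]; exact ⟨hnx, hxn⟩
  obtain ⟨y, hy, hfy⟩ := intermediate_value_Ioc (hs (Nat.lt_succ_self _)).le hf.continuousOn hx'
  exact ⟨y, ⟨(hs.antitone.le_of_tendsto hL _).trans_lt hy.1, hy.2.trans_lt hnx⟩, hfy⟩

theorem exists_backward_orbit_above_limit (hf : Continuous f) (hs : StrictAnti s)
    (hback : ∀ n, f (s (n + 1)) = s n) (hL : Tendsto s atTop (𝓝 L)) {x : α}
    (hx : x ∈ Ioo (f (s 0)) L) :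
    ∃ u : ℕ → α, u 0 = x ∧ (∀ n, f (u (n + 1)) = u n) ∧ (∀ n, L < u (n + 1)) ∧
      ∀ n, u (n + 2) < u (n + 1) := by
  have hfL : f L = L := isFixedPt_of_tendsto_of_backward hL hf.continuousAt hback
  obtain ⟨d, hd, hfd⟩ : ∃ d ∈ Ioo L (s 0), f d = x :=
    intermediate_value_Ioo' (hs.antitone.le_of_tendsto hL 0) hf.continuousOn (by rwa [hfL])
  have step (y : α) (hy : y ∈ Ioo L (s 0)) : ∃ y' ∈ Ioo L (s 0), y' < y ∧ f y' = y := by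
    obtain ⟨y', hy', hfy'⟩ := exists_preimage_mem_Ioo_of_strictAnti hf hs hback hL hy
    exact ⟨y', ⟨hy'.1, hy'.2.trans hy.2⟩, hy'.2, hfy'⟩
  obtain ⟨t, rfl, ht⟩ := exists_seq_of_forall_exists _ (fun y x => y < x ∧ f y = x) step hd
  refine ⟨fun | 0 => x | n + 1 => t n, rfl, ?_, fun n => (ht n).1.1, fun n => (ht n).2.1⟩
  rintro (_ | n)
  · exact hfd
  · exact (ht n).2.2

end BackwardOrbit

def spliceAt {α : Type*} (m : ℕ) (z u : ℕ → α) (i : ℕ) : α :=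
  if i ≤ m then z i else u (i - (m + 1))

section Splice

variable {α : Type*} {m : ℕ} {z u : ℕ → α}

theorem spliceAt_of_le {i : ℕ} (h : i ≤ m) : spliceAt m z u i = z i := if_pos h

theorem spliceAt_add (n : ℕ) : spliceAt m z u (m + 1 + n) = u n := by
  rw [spliceAt, if_neg (by omega), Nat.add_sub_cancel_left]

theorem spliceAt_backward {f : α → α} (hz : ∀ i < m, f (z (i + 1)) = z i)
    (hu0 : f (u 0) = z m) (hu : ∀ n, f (u (n + 1)) = u n) (i : ℕ) :
    f (spliceAt m z u (i + 1)) = spliceAt m z u i := by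
  rcases lt_trichotomy i m with hi | rfl | hi
  · rw [spliceAt_of_le hi, spliceAt_of_le hi.le, hz i hi]
  · rw [spliceAt_of_le le_rfl, ← hu0]
    exact congrArg f (spliceAt_add 0)
  · obtain ⟨n, rfl⟩ : ∃ n, i = m + 1 + n := ⟨i - (m + 1), by omega⟩
    rw [spliceAt_add, ← hu n]
    exact congrArg f (spliceAt_add (n + 1))

end Splice

theorem stmt_6 (f : ℝ → ℝ) (hf : Continuous f) (m : ℕ) (hm : 2 ≤ m)
    (z : ℕ → ℝ)
    (hfix : f (z 0) = z 0)
    (hback : ∀ i, f (z (i + 1)) = z i)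
    (hinc : ∀ i, 1 ≤ i → i + 1 ≤ m → z i < z (i + 1))
    (hmid : z m < z 0)
    (habove : ∀ i, m + 1 ≤ i → z 0 < z i)
    (hdec : ∀ i, m + 1 ≤ i → z (i + 1) < z i) :
    ∃ w : ℕ → ℝ,
      f (w 0) = w 0 ∧
      (∀ i, f (w (i + 1)) = w i) ∧
      (∀ i, 1 ≤ i → i + 1 ≤ m + 1 → w i < w (i + 1)) ∧
      w (m + 1) < w 0 ∧
      (∀ j, m + 2 ≤ j → w 0 < w j) ∧
      (∀ j, m + 2 ≤ j → w (j + 1) < w j) := by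
  have hs : StrictAnti fun n => z (m + 1 + n) :=
    strictAnti_nat_of_succ_lt fun n => hdec (m + 1 + n) (by omega)
  obtain ⟨L, hL⟩ : ∃ L, Tendsto (fun n => z (m + 1 + n)) atTop (𝓝 L) :=
    ⟨_, tendsto_atTop_ciInf hs.antitone ⟨z 0, by rintro _ ⟨n, rfl⟩; exact (habove _ (by omega)).le⟩⟩
  have hz0L : z 0 ≤ L := ge_of_tendsto' hL fun n => (habove (m + 1 + n) (by omega)).le
  have hzm : f (z m) < z m := by
    obtain ⟨k, rfl⟩ : ∃ k, m = k + 1 := ⟨m - 1, by omega⟩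
    rw [hback]
    exact hinc k (by omega) le_rfl
  obtain ⟨c, hc, hfc⟩ : ∃ c ∈ Ioo (z m) (z 0), f c = z m :=
    intermediate_value_Ioo hmid.le hf.continuousOn (by rw [hfix]; exact ⟨hzm, hmid⟩)
  obtain ⟨u, rfl, hu, huL, hu_anti⟩ := exists_backward_orbit_above_limit hf hs
    (fun n => hback _) hL ⟨(hback m).trans_lt hc.1, hc.2.trans_le hz0L⟩
  refine ⟨spliceAt m z u, by rw [spliceAt_of_le m.zero_le, hfix],
    spliceAt_backward (fun i _ => hback i) hfc hu, fun i hi hi' => ?_,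
    (spliceAt_add 0).trans_lt (hc.2.trans_eq (spliceAt_of_le m.zero_le).symm), ?_, ?_⟩
  · rcases (by omega : i + 1 ≤ m ∨ i = m) with hi'' | rfl
    · rw [spliceAt_of_le hi'', spliceAt_of_le (by omega)]
      exact hinc i hi hi''
    · rw [spliceAt_of_le le_rfl]
      exact hc.1.trans_eq (spliceAt_add 0).symm
  all_goals
    intro j hj
    obtain ⟨n, rfl⟩ : ∃ n, j = m + 1 + (n + 1) := ⟨j - (m + 2), by omega⟩
  · rw [spliceAt_of_le m.zero_le, spliceAt_add]
    exact hz0L.trans_lt (huL n)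
  · rw [spliceAt_add]
    exact (spliceAt_add (n + 2)).trans_lt (hu_anti n)
end

section
/- If f : ℝ → ℝ is continuous and has a period-3 point x₀ with orbit x₂ < x₀ < x₁ (where x₁ = f(x₀), x₂ = f(x₁), x₀ = f(x₂)), then f² = f ∘ f has a periodic point y₀ of period 4 whose f²-orbit y₀, y₁, y₂, y₃ satisfies y₃ < y₂ < y₀ < y₁ (type L²(2,2)). -/
/-!
Write `g = f ∘ f`. On the orbit `x₂ < x₀ < x₁` it acts by `x₂ ↦ x₁ ↦ x₀ ↦ x₂`, and there is
`γ ∈ [x₀, x₁]` with `f γ = x₀`, hence `g γ = x₁`. The intervals `[x₂, x₀]`, `[x₀, γ]`, `[γ, x₁]` are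
then `g`-covered in the pattern needed for a cycle `y₃ < y₂ < y₀ < y₁`: pulling back successively
through these coverings gives intervals `K₃ ⊆ [x₂, x₀]`, `K₂ ⊆ [x₀, γ]`, `K₁ ⊆ [γ, x₁]` and
`K₀ ⊆ [γ, min K₁]` with `g K₀ ⊆ K₁`, `g K₁ ⊆ K₂`, `g K₂ ⊆ K₃`, `g K₃ ⊆ [γ, x₁]`, the endpoints being
mapped to endpoints. Then `g⁴` maps the ends of `K₀` to `x₁` and `γ`, so it has a fixed point in
`K₀`. The weak order of its orbit is read off from the intervals; strictness follows because any
coincidence would make `x₀` a fixed point of `g`.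
-/

open Set

section Pullback

variable {α δ : Type*} [ConditionallyCompleteLinearOrder α] [TopologicalSpace α] [OrderTopology α]
  [DenselyOrdered α] [LinearOrder δ] [TopologicalSpace δ] [OrderClosedTopology δ]
  {f : α → δ} {p q : α} {u v : δ}

theorem ContinuousOn.exists_eq_and_forall_Ico_lt (hf : ContinuousOn f (Icc p q)) (hpq : p ≤ q)
    (hq : f q ≤ u) (hp : u ≤ f p) : ∃ c ∈ Icc p q, f c = u ∧ ∀ x ∈ Ico p c, u < f x := by
  have hS : IsCompact (Icc p q ∩ f ⁻¹' {u}) :=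
    isCompact_Icc.of_isClosed_subset
      (hf.preimage_isClosed_of_isClosed isClosed_Icc isClosed_singleton) inter_subset_left
  obtain ⟨c, ⟨hc, hfc⟩, hleast⟩ := hS.exists_isLeast (intermediate_value_Icc' hpq hf ⟨hq, hp⟩)
  refine ⟨c, hc, hfc, fun x hx => lt_of_not_ge fun hfx => ?_⟩
  have hxq : x ≤ q := hx.2.le.trans hc.2
  obtain ⟨z, hz, hfz⟩ :=
    intermediate_value_Icc' hx.1 (hf.mono (Icc_subset_Icc_right hxq)) ⟨hfx, hp⟩
  exact (hleast ⟨⟨hz.1, hz.2.trans hxq⟩, hfz⟩).not_gt (hz.2.trans_lt hx.2)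

theorem ContinuousOn.exists_eq_and_forall_Ioc_lt (hf : ContinuousOn f (Icc p q)) (hpq : p ≤ q)
    (hq : f q ≤ u) (hp : u ≤ f p) : ∃ d ∈ Icc p q, f d = u ∧ ∀ x ∈ Ioc d q, f x < u := by
  have hS : IsCompact (Icc p q ∩ f ⁻¹' {u}) :=
    isCompact_Icc.of_isClosed_subset
      (hf.preimage_isClosed_of_isClosed isClosed_Icc isClosed_singleton) inter_subset_left
  obtain ⟨d, ⟨hd, hfd⟩, hgreatest⟩ :=
    hS.exists_isGreatest (intermediate_value_Icc' hpq hf ⟨hq, hp⟩)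
  refine ⟨d, hd, hfd, fun x hx => lt_of_not_ge fun hfx => ?_⟩
  have hpx : p ≤ x := hd.1.trans hx.1.le
  obtain ⟨z, hz, hfz⟩ :=
    intermediate_value_Icc' hx.2 (hf.mono (Icc_subset_Icc_left hpx)) ⟨hq, hfx⟩
  exact (hgreatest ⟨⟨hpx.trans hz.1, hz.2⟩, hfz⟩).not_gt (hx.1.trans_le hz.1)

theorem ContinuousOn.exists_Icc_subset_mapsTo_of_ge_of_le (hf : ContinuousOn f (Icc p q))
    (hpq : p ≤ q) (huv : u ≤ v) (hp : v ≤ f p) (hq : f q ≤ u) :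
    ∃ p' q', p ≤ p' ∧ p' ≤ q' ∧ q' ≤ q ∧ f p' = v ∧ f q' = u ∧
      MapsTo f (Icc p' q') (Icc u v) := by
  obtain ⟨c, hc, hfc, hlt⟩ := hf.exists_eq_and_forall_Ico_lt hpq hq (huv.trans hp)
  obtain ⟨d, hd, hfd, hgt⟩ :=
    (hf.mono (Icc_subset_Icc_right hc.2)).exists_eq_and_forall_Ioc_lt hc.1 (hfc ▸ huv) hp
  refine ⟨d, c, hd.1, hd.2, hc.2, hfd, hfc, fun x hx => ⟨?_, ?_⟩⟩
  · rcases hx.2.eq_or_lt with rfl | hxc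
    · exact hfc.ge
    · exact (hlt x ⟨hd.1.trans hx.1, hxc⟩).le
  · rcases hx.1.eq_or_lt with rfl | hdx
    · exact hfd.le
    · exact (hgt x ⟨hdx, hx.2⟩).le

theorem ContinuousOn.exists_Icc_subset_mapsTo_of_le_of_ge (hf : ContinuousOn f (Icc p q))
    (hpq : p ≤ q) (huv : u ≤ v) (hp : f p ≤ u) (hq : v ≤ f q) :
    ∃ p' q', p ≤ p' ∧ p' ≤ q' ∧ q' ≤ q ∧ f p' = u ∧ f q' = v ∧
      MapsTo f (Icc p' q') (Icc u v) := by
  obtain ⟨p', q', hp', hpq', hq', hfp', hfq', hmaps⟩ :=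
    (continuous_toDual.comp_continuousOn hf).exists_Icc_subset_mapsTo_of_ge_of_le
      (u := OrderDual.toDual v) (v := OrderDual.toDual u) hpq huv hp hq
  exact ⟨p', q', hp', hpq', hq', hfp', hfq', fun x hx => (hmaps hx).symm⟩

end Pullback

theorem lt_of_le_of_four_cycle {α : Type*} [LinearOrder α] {g : α → α} {b y0 y1 y2 y3 : α}
    (hb : g b ≠ b) (h01 : g y0 = y1) (h12 : g y1 = y2) (h23 : g y2 = y3)
    (hy3 : y3 ≤ b) (hy2 : b ≤ y2) (hy20 : y2 ≤ y0) (hy01 : y0 ≤ y1) :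
    y3 < y2 ∧ y2 < y0 ∧ y0 < y1 := by
  have hne32 : y3 ≠ y2 := by
    rintro rfl
    obtain rfl : b = y3 := le_antisymm hy2 hy3
    exact hb h23
  have hne20 : y2 ≠ y0 := by
    rintro rfl
    exact hne32 (le_antisymm (hy3.trans hy2) (hy01.trans (h01.symm.trans h23).le))
  have hne01 : y0 ≠ y1 := by
    rintro rfl
    exact hne20 (h12.symm.trans h01)
  exact ⟨lt_of_le_of_ne (hy3.trans hy2) hne32, lt_of_le_of_ne hy20 hne20, lt_of_le_of_ne hy01 hne01⟩

theorem exists_four_cycle_of_three_cycle {α : Type*} [ConditionallyCompleteLinearOrder α]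
    [TopologicalSpace α] [OrderTopology α] [DenselyOrdered α] {g : α → α} (hg : Continuous g)
    {a b c γ : α}
    (hab : a < b) (hbγ : b ≤ γ) (hγc : γ ≤ c)
    (ha : g a = c) (hb : g b = a) (hc : g c = b) (hγ : g γ = c) :
    ∃ y0 y1 y2 y3 : α, g y0 = y1 ∧ g y1 = y2 ∧ g y2 = y3 ∧ g y3 = y0 ∧
      y3 < y2 ∧ y2 < y0 ∧ y0 < y1 := by
  obtain ⟨a3, b3, ha3, hab3, hb3, hga3, hgb3, hK3⟩ :=
    hg.continuousOn.exists_Icc_subset_mapsTo_of_ge_of_le hab.le hγc ha.ge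
      (hb ▸ hab.le.trans hbγ)
  obtain ⟨a2, b2, ha2, hab2, hb2, hga2, hgb2, hK2⟩ :=
    hg.continuousOn.exists_Icc_subset_mapsTo_of_le_of_ge hbγ hab3 (hb ▸ ha3)
      (hγ ▸ hb3.trans (hbγ.trans hγc))
  obtain ⟨a1, b1, ha1, hab1, hb1, hga1, hgb1, hK1⟩ :=
    hg.continuousOn.exists_Icc_subset_mapsTo_of_ge_of_le hγc hab2 (hγ ▸ hb2.trans hγc)
      (hc ▸ ha2)
  obtain ⟨a0, b0, ha0, hab0, hb0, hga0, hgb0, hK0⟩ :=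
    hg.continuousOn.exists_Icc_subset_mapsTo_of_ge_of_le ha1 hab1 (hγ ▸ hb1)
      (hga1 ▸ hb2.trans ha1)
  have hga0 : g^[4] a0 = c := by
    simp only [Function.iterate_succ_apply, Function.iterate_zero_apply, hga0, hgb1, hga2, hga3]
  have hgb0 : g^[4] b0 = γ := by
    simp only [Function.iterate_succ_apply, Function.iterate_zero_apply, hgb0, hga1, hgb2, hgb3]
  obtain ⟨y, hy, hfix⟩ := exists_mem_Icc_isFixedPt (hg.iterate 4).continuousOn hab0
    (hga0 ▸ hab0.trans (hb0.trans (hab1.trans hb1))) (hgb0 ▸ ha0.trans hab0)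
  have hy1 := hK0 hy
  have hy2 := hK1 hy1
  have hy3 := hK2 hy2
  refine ⟨y, g y, g (g y), g (g (g y)), rfl, rfl, rfl, hfix, ?_⟩
  exact lt_of_le_of_four_cycle (hb.trans_ne hab.ne) rfl rfl rfl
    (hy3.2.trans hb3) (ha2.trans hy2.1) (hy2.2.trans (hb2.trans (ha0.trans hy.1)))
    (hy.2.trans (hb0.trans hy1.1))

theorem stmt_8 (f : ℝ → ℝ) (hf : Continuous f)
    (x0 x1 x2 : ℝ)
    (h01 : f x0 = x1) (h12 : f x1 = x2) (h20 : f x2 = x0)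
    (hord1 : x2 < x0) (hord2 : x0 < x1) :
    ∃ y0 y1 y2 y3 : ℝ,
      (f ∘ f) y0 = y1 ∧ (f ∘ f) y1 = y2 ∧ (f ∘ f) y2 = y3 ∧ (f ∘ f) y3 = y0 ∧
      y3 < y2 ∧ y2 < y0 ∧ y0 < y1 := by
  obtain ⟨γ, hγ, hfγ⟩ := intermediate_value_Icc' hord2.le hf.continuousOn
    (show x0 ∈ Icc (f x1) (f x0) from ⟨h12 ▸ hord1.le, h01 ▸ hord2.le⟩)
  exact exists_four_cycle_of_three_cycle (hf.comp hf) hord1 hγ.1 hγ.2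
    (by simp [h20, h01]) (by simp [h01, h12]) (by simp [h12, h20]) (by simp [hfγ, h01])
end

section
/- If f : ℝ → ℝ is continuous and has a period-(2n+1) point x₀ with orbit of Štefan type x_{2n} < x_{2n-2} < ⋯ < x₂ < x₀ < x₁ < x₃ < ⋯ < x_{2n-1} (where x_{i+1}=f(x_i) cyclically), n ≥ 2, then f² has a periodic orbit of period 2n+1 of type L(n+1,n): points y₀,...,y_{2n} with f²(y_i)=y_{i+1} cyclically, all distinct, and y_{2n} < ⋯ < y_{n+1} < y_n < y₀ < y₁ < ⋯ < y_{n-1}. -/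
/-!
The orbit of `x₀` under `f` is already the required orbit of `f²`: starting from `x₁`, the map
`f²` visits `x₁ < x₃ < ⋯ < x_{2n-1}`, then `x_{2n+1} = x₀`, then `x₂ > x₄ > ⋯ > x_{2n}`, i.e.
`yᵢ = x_{(2i+1) mod (2n+1)}`. Since `2` is invertible modulo `2n+1`, these are all the orbit points.
-/

section PeriodicOrbit

variable {α : Type*} {f : α → α} {m : ℕ} {x : ℕ → α}

theorem iterate_orbit_mod (hcyc : ∀ i < m, f (x i) = x ((i + 1) % m)) (hm : 0 < m) (k i : ℕ) :
    f^[k] (x (i % m)) = x ((i + k) % m) := by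
  induction k with
  | zero => simp
  | succ k ih =>
    rw [Function.iterate_succ_apply', ih, hcyc _ (Nat.mod_lt _ hm), Nat.mod_add_mod, add_assoc]

theorem iterate_orbit_mul_add_mod (hcyc : ∀ i < m, f (x i) = x ((i + 1) % m)) (hm : 0 < m)
    (k c i : ℕ) : f^[k] (x ((k * i + c) % m)) = x ((k * ((i + 1) % m) + c) % m) := by
  have h : k * i + c + k ≡ k * ((i + 1) % m) + c [MOD m] :=
    calc k * i + c + k = k * (i + 1) + c := by ring
      _ ≡ k * ((i + 1) % m) + c [MOD m] :=
        (((Nat.mod_modEq (i + 1) m).mul_left k).add_right c).symm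
  rw [iterate_orbit_mod hcyc hm]
  exact congrArg x h

end PeriodicOrbit

theorem Nat.eq_of_mul_add_mod_eq {m k c a b : ℕ} (hkm : m.gcd k = 1) (ha : a < m) (hb : b < m)
    (h : (k * a + c) % m = (k * b + c) % m) : a = b :=
  (Nat.ModEq.add_right_cancel' c h).cancel_left_of_coprime hkm |>.eq_of_lt_of_lt ha hb

theorem Nat.two_mul_add_one_mod_of_le {n i : ℕ} (hni : n ≤ i) (hi : i < 2 * n + 1) :
    (2 * i + 1) % (2 * n + 1) = 2 * (i - n) := by
  rw [show 2 * i + 1 = 2 * n + 1 + 2 * (i - n) by omega, Nat.add_mod_left,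
    Nat.mod_eq_of_lt (by omega)]

theorem stmt_9_general (f : ℝ → ℝ) (n : ℕ) (hn : 2 ≤ n)
    (x : ℕ → ℝ)
    (hcyc : ∀ i < 2 * n + 1, f (x i) = x ((i + 1) % (2 * n + 1)))
    (hdist : ∀ i < 2 * n + 1, ∀ j < 2 * n + 1, x i = x j → i = j)
    (heven : ∀ i, 2 * i + 2 ≤ 2 * n → x (2 * i + 2) < x (2 * i))
    (h01 : x 0 < x 1)
    (hodd : ∀ i, 2 * i + 3 ≤ 2 * n → x (2 * i + 1) < x (2 * i + 3)) :
    ∃ y : ℕ → ℝ,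
      (∀ i < 2 * n + 1, (f ∘ f) (y i) = y ((i + 1) % (2 * n + 1))) ∧
      (∀ i < 2 * n + 1, ∀ j < 2 * n + 1, y i = y j → i = j) ∧
      (∀ i, n ≤ i → i + 1 < 2 * n + 1 → y (i + 1) < y i) ∧
      y n < y 0 ∧
      (∀ i, i + 1 < n → y i < y (i + 1)) := by
  have hm : 0 < 2 * n + 1 := Nat.succ_pos _
  have hodd_coprime : (2 * n + 1).gcd 2 = 1 := by simp [Nat.gcd_comm]
  refine ⟨fun i => x ((2 * i + 1) % (2 * n + 1)), fun i _ => ?_, fun i hi j hj hij => ?_,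
    fun i hni hi => ?_, ?_, fun i hi => ?_⟩
  · exact iterate_orbit_mul_add_mod hcyc hm 2 1 i
  · exact Nat.eq_of_mul_add_mod_eq hodd_coprime hi hj <|
      hdist _ (Nat.mod_lt _ hm) _ (Nat.mod_lt _ hm) hij
  · show x ((2 * (i + 1) + 1) % (2 * n + 1)) < x ((2 * i + 1) % (2 * n + 1))
    rw [Nat.two_mul_add_one_mod_of_le (hni.trans i.le_succ) hi,
      Nat.two_mul_add_one_mod_of_le hni (by omega), show i + 1 - n = i - n + 1 by omega]
    exact heven (i - n) (by omega)
  · simpa [Nat.mod_eq_of_lt (by omega : 1 < 2 * n + 1)] using h01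
  · simp only [Nat.mod_eq_of_lt (by omega : 2 * i + 1 < 2 * n + 1),
      Nat.mod_eq_of_lt (by omega : 2 * (i + 1) + 1 < 2 * n + 1)]
    exact hodd i (by omega)

theorem stmt_9 (f : ℝ → ℝ) (hf : Continuous f) (n : ℕ) (hn : 2 ≤ n)
    (x : ℕ → ℝ)
    (hcyc : ∀ i < 2 * n + 1, f (x i) = x ((i + 1) % (2 * n + 1)))
    (hdist : ∀ i < 2 * n + 1, ∀ j < 2 * n + 1, x i = x j → i = j)
    (heven : ∀ i, 2 * i + 2 ≤ 2 * n → x (2 * i + 2) < x (2 * i))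
    (h01 : x 0 < x 1)
    (hodd : ∀ i, 2 * i + 3 ≤ 2 * n → x (2 * i + 1) < x (2 * i + 3)) :
    ∃ y : ℕ → ℝ,
      (∀ i < 2 * n + 1, (f ∘ f) (y i) = y ((i + 1) % (2 * n + 1))) ∧
      (∀ i < 2 * n + 1, ∀ j < 2 * n + 1, y i = y j → i = j) ∧
      (∀ i, n ≤ i → i + 1 < 2 * n + 1 → y (i + 1) < y i) ∧
      y n < y 0 ∧
      (∀ i, i + 1 < n → y i < y (i + 1)) :=
  stmt_9_general f n hn x hcyc hdist heven h01 hodd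
end

section
/- If f : ℝ → ℝ is continuous and has a period-3 point with orbit x₂ < x₀ < x₁, then f² has at least three fixed points a < b < c with x₂ < a < x₀ and x₀ < b < c < x₁. -/
/-!
Let `y ∈ (x₀, x₁)` be a preimage of `x₀` under `f`, which exists since
`f x₁ = x₂ < x₀ < x₁ = f x₀`. Then `f²` sends `x₂ ↦ x₁`, `x₀ ↦ x₂`, `y ↦ x₁` and `x₁ ↦ x₀`,
so `f² x - x` changes sign on each of `(x₂, x₀)`, `(x₀, y)` and `(y, x₁)`, and the intermediate
value theorem gives a fixed point of `f²` in each of them.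
-/

open Function Set

theorem exists_isFixedPt_mem_Ioo_of_lt_of_gt {g : ℝ → ℝ} {u v : ℝ} (huv : u < v)
    (hg : ContinuousOn g (Icc u v)) (hu : u < g u) (hv : g v < v) :
    ∃ t ∈ Ioo u v, IsFixedPt g t := by
  obtain ⟨t, ht, hgt⟩ := intermediate_value_Ioo' huv.le (hg.sub continuousOn_id)
    (show (0 : ℝ) ∈ Ioo (g v - v) (g u - u) from ⟨by linarith, by linarith⟩)
  exact ⟨t, ht, sub_eq_zero.mp hgt⟩

theorem exists_isFixedPt_mem_Ioo_of_gt_of_lt {g : ℝ → ℝ} {u v : ℝ} (huv : u < v)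
    (hg : ContinuousOn g (Icc u v)) (hu : g u < u) (hv : v < g v) :
    ∃ t ∈ Ioo u v, IsFixedPt g t := by
  obtain ⟨t, ht, hgt⟩ := intermediate_value_Ioo huv.le (hg.sub continuousOn_id)
    (show (0 : ℝ) ∈ Ioo (g u - u) (g v - v) from ⟨by linarith, by linarith⟩)
  exact ⟨t, ht, sub_eq_zero.mp hgt⟩

theorem stmt_11 (f : ℝ → ℝ) (hf : Continuous f)
    (x0 x1 x2 : ℝ)
    (h01 : f x0 = x1) (h12 : f x1 = x2) (h20 : f x2 = x0)
    (hord1 : x2 < x0) (hord2 : x0 < x1) :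
    ∃ a b c : ℝ,
      (f ∘ f) a = a ∧ (f ∘ f) b = b ∧ (f ∘ f) c = c ∧
      x2 < a ∧ a < x0 ∧ x0 < b ∧ b < c ∧ c < x1 := by
  have hff : Continuous (f ∘ f) := hf.comp hf
  obtain ⟨y, hy, hfy⟩ : ∃ y ∈ Ioo x0 x1, f y = x0 :=
    intermediate_value_Ioo' hord2.le hf.continuousOn (by rw [h01, h12]; exact ⟨hord1, hord2⟩)
  obtain ⟨a, ha, hfa⟩ := exists_isFixedPt_mem_Ioo_of_lt_of_gt hord1 hff.continuousOn
    (by simp only [comp_apply, h20, h01]; linarith) (by simp only [comp_apply, h01, h12]; linarith)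
  obtain ⟨b, hb, hfb⟩ := exists_isFixedPt_mem_Ioo_of_gt_of_lt hy.1 hff.continuousOn
    (by simp only [comp_apply, h01, h12]; linarith)
    (by simp only [comp_apply, hfy, h01]; exact hy.2)
  obtain ⟨c, hc, hfc⟩ := exists_isFixedPt_mem_Ioo_of_lt_of_gt hy.2 hff.continuousOn
    (by simp only [comp_apply, hfy, h01]; exact hy.2)
    (by simp only [comp_apply, h12, h20]; exact hord2)
  exact ⟨a, b, c, hfa, hfb, hfc, ha.1, ha.2, hb.1, hb.2.trans hc.1, hc.2⟩
end

section
/- If f : ℝ → ℝ is continuous and has a fixed point x₀ with a backward orbit (x_{-i}) satisfying x₀ < ⋯ < x_{-i} < x_{-i+1} < ⋯ < x_{-2} < x_{-1} (type L(∞)), then for every n ≥ 2, f has a periodic point y₀ of period n whose orbit satisfies y₀ < y₁ < ⋯ < y_{n-1} (type L(n)). -/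
/-! Let `J j` be the interval between `x (j + 1)` and `x j`. By the intermediate value theorem
`f '' J (j + 1) ⊇ J j`, and `J n ⊆ J 0 = [x 0, x 1]`. Pulling intervals back one step at a time
along the loop `J n → J (n - 1) → ⋯ → J 0 ⊇ J n` yields a subinterval of `J n` that `f^[n]` maps
onto `J 0`, hence a fixed point `y` of `f^[n]` with `f^[k] y ∈ J (n - k)`. Consecutive intervals
meet only in a point `x j` that `f` moves to `x (j - 1)`, so the orbit is strictly increasing. -/

open Set Function

theorem ContinuousOn.exists_image_Icc_eq_Icc {f : ℝ → ℝ} {u v : ℝ}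
    (hf : ContinuousOn f (Icc u v)) (huv : u ≤ v) (hfuv : f u ≤ f v) :
    ∃ a b, a ≤ b ∧ Icc a b ⊆ Icc u v ∧ f '' Icc a b = Icc (f u) (f v) := by
  -- `b` is the first time after `u` at which `f` reaches `f v`, `a` the last time before `b` at
  -- which it equals `f u`; in between `f` stays strictly between the two values.
  set S := Icc u v ∩ f ⁻¹' {f v}
  have hS : IsClosed S := hf.preimage_isClosed_of_isClosed isClosed_Icc isClosed_singleton
  have hbS : sInf S ∈ S :=
    hS.csInf_mem ⟨v, right_mem_Icc.2 huv, rfl⟩ (bddBelow_Icc.mono inter_subset_left)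
  set b := sInf S
  set T := Icc u b ∩ f ⁻¹' {f u}
  have hTf : ContinuousOn f (Icc u b) := hf.mono (Icc_subset_Icc_right hbS.1.2)
  have hT : IsClosed T := hTf.preimage_isClosed_of_isClosed isClosed_Icc isClosed_singleton
  have haT : sSup T ∈ T :=
    hT.csSup_mem ⟨u, left_mem_Icc.2 hbS.1.1, rfl⟩ (bddAbove_Icc.mono inter_subset_left)
  set a := sSup T
  have hab : Icc a b ⊆ Icc u v := Icc_subset_Icc haT.1.1 hbS.1.2
  have hfa : f a = f u := haT.2
  have hfb : f b = f v := hbS.2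
  refine ⟨a, b, haT.1.2, hab, subset_antisymm ?_ ?_⟩
  · rintro _ ⟨z, hz, rfl⟩
    constructor
    · by_contra! hlt
      obtain ⟨w, hw, hfw⟩ : f u ∈ f '' Icc z b :=
        intermediate_value_Icc hz.2 (hf.mono ((Icc_subset_Icc_left hz.1).trans hab))
          ⟨hlt.le, hfb ▸ hfuv⟩
      have : w ≤ a := le_csSup (bddAbove_Icc.mono inter_subset_left)
        ⟨⟨(haT.1.1.trans hz.1).trans hw.1, hw.2⟩, hfw⟩
      have : z = a := le_antisymm (hw.1.trans this) hz.1
      exact hlt.ne (by rw [this, hfa])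
    · by_contra! hlt
      obtain ⟨w, hw, hfw⟩ : f v ∈ f '' Icc a z :=
        intermediate_value_Icc hz.1 (hf.mono ((Icc_subset_Icc_right hz.2).trans hab))
          ⟨hfa ▸ hfuv, hlt.le⟩
      have : b ≤ w := csInf_le (bddBelow_Icc.mono inter_subset_left)
        ⟨⟨haT.1.1.trans hw.1, hw.2.trans (hz.2.trans hbS.1.2)⟩, hfw⟩
      have : z = b := le_antisymm hz.2 (this.trans hw.2)
      exact hlt.ne' (by rw [this, hfb])
  · simpa only [hfa, hfb] using intermediate_value_Icc haT.1.2 (hf.mono hab)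

theorem ContinuousOn.exists_image_uIcc_eq_uIcc {f : ℝ → ℝ} {u v : ℝ}
    (hf : ContinuousOn f (uIcc u v)) :
    ∃ a b, uIcc a b ⊆ uIcc u v ∧ f '' uIcc a b = uIcc (f u) (f v) := by
  wlog huv : u ≤ v generalizing u v
  · obtain ⟨a, b, hab, himage⟩ := this (uIcc_comm u v ▸ hf) (le_of_not_ge huv)
    exact ⟨a, b, uIcc_comm u v ▸ hab, uIcc_comm (f u) (f v) ▸ himage⟩
  wlog hfuv : f u ≤ f v generalizing f
  · obtain ⟨a, b, hab, himage⟩ := this hf.neg (neg_le_neg (le_of_not_ge hfuv))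
    refine ⟨a, b, hab, ?_⟩
    simpa [image_image] using congrArg (Neg.neg '' ·) himage
  rw [uIcc_of_le huv] at hf ⊢
  obtain ⟨a, b, hab, hsub, himage⟩ := hf.exists_image_Icc_eq_Icc huv hfuv
  exact ⟨a, b, uIcc_of_le hab ▸ hsub, by rw [uIcc_of_le hab, uIcc_of_le hfuv, himage]⟩

theorem ContinuousOn.exists_image_uIcc_eq_of_subset_image {f : ℝ → ℝ} {u v p q : ℝ}
    (hf : ContinuousOn f (uIcc u v)) (h : uIcc p q ⊆ f '' uIcc u v) :
    ∃ a b, uIcc a b ⊆ uIcc u v ∧ f '' uIcc a b = uIcc p q := by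
  obtain ⟨s, hs, rfl⟩ := h left_mem_uIcc
  obtain ⟨t, ht, rfl⟩ := h right_mem_uIcc
  have hst : uIcc s t ⊆ uIcc u v := uIcc_subset_uIcc hs ht
  obtain ⟨a, b, hab, himage⟩ := (hf.mono hst).exists_image_uIcc_eq_uIcc
  exact ⟨a, b, hab.trans hst, himage⟩

theorem Continuous.exists_uIcc_itinerary {f : ℝ → ℝ} (hf : Continuous f) (n : ℕ) {a b : ℕ → ℝ}
    (hcover : ∀ k < n, uIcc (a (k + 1)) (b (k + 1)) ⊆ f '' uIcc (a k) (b k)) :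
    ∃ c d, (∀ k ≤ n, MapsTo f^[k] (uIcc c d) (uIcc (a k) (b k))) ∧
      f^[n] '' uIcc c d = uIcc (a n) (b n) := by
  induction n generalizing a b with
  | zero => exact ⟨a 0, b 0, fun k hk => by rw [Nat.le_zero.1 hk]; exact mapsTo_id _, image_id _⟩
  | succ n ih =>
    obtain ⟨c, d, hmaps, himage⟩ := ih (a := (a ·.succ)) (b := (b ·.succ))
      fun k hk => hcover (k + 1) (by omega)
    have hsub : uIcc c d ⊆ f '' uIcc (a 0) (b 0) :=
      fun y hy => hcover 0 n.succ_pos (by simpa using hmaps 0 n.zero_le hy)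
    obtain ⟨c', d', hc'd', himage'⟩ :=
      hf.continuousOn.exists_image_uIcc_eq_of_subset_image hsub
    refine ⟨c', d', fun k hk => ?_, by rw [iterate_succ, image_comp, himage', himage]⟩
    cases k with
    | zero => exact fun y hy => hc'd' hy
    | succ k =>
      rw [iterate_succ]
      exact (hmaps k (by omega)).comp (himage' ▸ mapsTo_image f _)

theorem Continuous.exists_isPeriodicPt_of_uIcc_covers {f : ℝ → ℝ} (hf : Continuous f) (n : ℕ)
    {a b : ℕ → ℝ} (hcover : ∀ k < n, uIcc (a (k + 1)) (b (k + 1)) ⊆ f '' uIcc (a k) (b k))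
    (hreturn : uIcc (a 0) (b 0) ⊆ uIcc (a n) (b n)) :
    ∃ y, IsPeriodicPt f n y ∧ ∀ k ≤ n, f^[k] y ∈ uIcc (a k) (b k) := by
  obtain ⟨c, d, hmaps, himage⟩ := hf.exists_uIcc_itinerary n hcover
  have hsurj : SurjOn f^[n] (uIcc c d) (uIcc c d) :=
    fun z hz => himage ▸ hreturn (hmaps 0 n.zero_le hz)
  obtain ⟨y, hy, hfix⟩ := exists_mem_uIcc_isFixedPt_of_surjOn (hf.iterate n).continuousOn hsurj
  exact ⟨y, hfix, fun k hk => hmaps k hk hy⟩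

section BackwardOrbit

variable {f : ℝ → ℝ} {x : ℕ → ℝ}

theorem uIcc_backward_orbit_subset_image (hf : Continuous f) (hback : ∀ i, f (x (i + 1)) = x i)
    (j : ℕ) : uIcc (x (j + 1)) (x j) ⊆ f '' uIcc (x (j + 2)) (x (j + 1)) := by
  simpa only [hback] using intermediate_value_uIcc (a := x (j + 2)) (b := x (j + 1)) hf.continuousOn

theorem lt_apply_of_mem_uIcc_backward_orbit (hback : ∀ i, f (x (i + 1)) = x i)
    (hdec : ∀ i, 1 ≤ i → x (i + 1) < x i) {j : ℕ} (hj : 1 ≤ j) {p : ℝ}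
    (hp : p ∈ uIcc (x (j + 2)) (x (j + 1))) (hfp : f p ∈ uIcc (x (j + 1)) (x j)) : p < f p := by
  rw [uIcc_of_le (hdec (j + 1) (by omega)).le] at hp
  rw [uIcc_of_le (hdec j hj).le] at hfp
  refine lt_of_le_of_ne (hp.2.trans hfp.1) fun heq => (hdec j hj).ne ?_
  -- `p = f p` forces `p = x (j + 1)`, a point that `f` moves to `x j`.
  have hpx : p = x (j + 1) := le_antisymm hp.2 (heq ▸ hfp.1)
  rw [← hback j, ← hpx, ← heq]

theorem backward_orbit_mem_uIcc (habove : ∀ i, 1 ≤ i → x 0 < x i)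
    (hdec : ∀ i, 1 ≤ i → x (i + 1) < x i) {m : ℕ} (hm : 1 ≤ m) : x m ∈ uIcc (x 1) (x 0) :=
  mem_uIcc.2 <| .inr ⟨(habove m hm).le,
    antitoneOn_nat_Ici_of_succ_le (fun i hi => (hdec i hi).le) (le_refl 1) hm hm⟩

end BackwardOrbit

theorem stmt_14_general (f : ℝ → ℝ) (hf : Continuous f)
    (x : ℕ → ℝ)
    (hback : ∀ i, f (x (i + 1)) = x i)
    (habove : ∀ i, 1 ≤ i → x 0 < x i)
    (hdec : ∀ i, 1 ≤ i → x (i + 1) < x i) :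
    ∀ n, 2 ≤ n → ∃ y : ℕ → ℝ,
      (∀ i < n, f (y i) = y ((i + 1) % n)) ∧
      (∀ i < n, ∀ j < n, y i = y j → i = j) ∧
      (∀ i, i + 1 < n → y i < y (i + 1)) := by
  intro n hn
  have hshift : ∀ k < n, n - k = n - (k + 1) + 1 := fun k hk => by omega
  have hcover : ∀ k < n, uIcc (x (n - (k + 1) + 1)) (x (n - (k + 1))) ⊆
      f '' uIcc (x (n - k + 1)) (x (n - k)) := fun k hk => by
    rw [hshift k hk]
    exact uIcc_backward_orbit_subset_image hf hback _
  have hreturn : uIcc (x (n - 0 + 1)) (x (n - 0)) ⊆ uIcc (x (n - n + 1)) (x (n - n)) := by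
    simpa using uIcc_subset_uIcc (backward_orbit_mem_uIcc (m := n + 1) habove hdec (by omega))
      (backward_orbit_mem_uIcc habove hdec (by omega))
  obtain ⟨y, hper, hy⟩ := hf.exists_isPeriodicPt_of_uIcc_covers n
    (a := fun k => x (n - k + 1)) (b := fun k => x (n - k)) hcover hreturn
  have hlt : ∀ k, k + 1 < n → f^[k] y < f^[k + 1] y := fun k hk => by
    have hk' := hy k (by omega)
    rw [hshift k (by omega)] at hk'
    rw [iterate_succ_apply']
    exact lt_apply_of_mem_uIcc_backward_orbit hback hdec (by omega) hk'
      (iterate_succ_apply' f k y ▸ hy (k + 1) hk.le)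
  have hmono : StrictMonoOn (f^[·] y) (Iic (n - 1)) :=
    strictMonoOn_Iic_of_lt_succ fun k hk => by
      rw [Order.succ_eq_add_one]; exact hlt k (by omega)
  refine ⟨(f^[·] y), fun i _ => ?_,
    fun i hi j hj => hmono.injOn (mem_Iic.2 (by omega)) (mem_Iic.2 (by omega)), hlt⟩
  show f (f^[i] y) = f^[(i + 1) % n] y
  rw [hper.iterate_mod_apply, iterate_succ_apply']

theorem stmt_14 (f : ℝ → ℝ) (hf : Continuous f)
    (x : ℕ → ℝ)
    (hfix : f (x 0) = x 0)
    (hback : ∀ i, f (x (i + 1)) = x i)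
    (habove : ∀ i, 1 ≤ i → x 0 < x i)
    (hdec : ∀ i, 1 ≤ i → x (i + 1) < x i) :
    ∀ n, 2 ≤ n → ∃ y : ℕ → ℝ,
      (∀ i < n, f (y i) = y ((i + 1) % n)) ∧
      (∀ i < n, ∀ j < n, y i = y j → i = j) ∧
      (∀ i, i + 1 < n → y i < y (i + 1)) :=
  stmt_14_general f hf x hback habove hdec
end

section
/- If f : ℝ → ℝ is continuous and has a period-3 point, then f² = f ∘ f has a period-4 point y₀ with orbit under f² satisfying either y₃ < y₂ < y₀ < y₁ or y₁ < y₀ < y₂ < y₃ (where y_{i+1} = f²(y_i)). -/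
/-!
Up to relabelling and conjugation by `x ↦ -x`, the 3-cycle is `c < a < b` with
`a ↦ b ↦ c ↦ a`. Let `g = f ∘ f`, let `w ∈ (a, b)` be a fixed point of `f`, and let `v` be a
fixed point of `g` beyond a point `τ ∈ [w, b]` with `g τ = b`. Then under `g` the intervals
`[a, w] → [c, a] → [w, v] → [v, b] → [a, w]` each cover the next, and pulling this loop back
to nested closed intervals mapped exactly onto each other, the intermediate value theorem for
`g^[4]` gives a point of `g`-period four with this itinerary. Since `g a = c`, `g w = w` and
`g v = v`, the orbit cannot sit on an endpoint shared by two consecutive intervals, which makes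
the order `y₁ < y₀ < y₂ < y₃` strict.
-/

open Set Function

theorem exists_Icc_image_eq_Icc_of_le_s17 {g : ℝ → ℝ} (hg : Continuous g) {α β : ℝ} (hαβ : α ≤ β)
    (hgαβ : g α ≤ g β) :
    ∃ s t, α ≤ s ∧ s ≤ t ∧ t ≤ β ∧ g '' Icc s t = Icc (g α) (g β) := by
  have hS : IsCompact (Icc α β ∩ {x | g x = g α}) :=
    isCompact_Icc.inter_right (isClosed_eq hg continuous_const)
  obtain ⟨s, ⟨⟨hαs, hsβ⟩, hgs⟩, hs_max⟩ := hS.exists_isGreatest ⟨α, ⟨le_rfl, hαβ⟩, rfl⟩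
  have hT : IsCompact (Icc s β ∩ {x | g x = g β}) :=
    isCompact_Icc.inter_right (isClosed_eq hg continuous_const)
  obtain ⟨t, ⟨⟨hst, htβ⟩, hgt⟩, ht_min⟩ := hT.exists_isLeast ⟨β, ⟨hsβ, le_rfl⟩, rfl⟩
  refine ⟨s, t, hαs, hst, htβ, Subset.antisymm ?_ ?_⟩
  · rintro _ ⟨x, ⟨hsx, hxt⟩, rfl⟩
    constructor
    · by_contra! hlt
      obtain ⟨x', ⟨hxx', hx't⟩, hgx'⟩ :=
        intermediate_value_Icc hxt hg.continuousOn ⟨hlt.le, hgt ▸ hgαβ⟩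
      have hx's : x' ≤ s := hs_max ⟨⟨hαs.trans (hsx.trans hxx'), hx't.trans htβ⟩, hgx'⟩
      obtain rfl : x = x' := le_antisymm hxx' (hx's.trans hsx)
      exact hlt.ne hgx'
    · by_contra! hlt
      obtain ⟨x', ⟨hsx', hx'x⟩, hgx'⟩ :=
        intermediate_value_Icc hsx hg.continuousOn ⟨hgs ▸ hgαβ, hlt.le⟩
      have htx' : t ≤ x' := ht_min ⟨⟨hsx', (hx'x.trans hxt).trans htβ⟩, hgx'⟩
      obtain rfl : x = x' := le_antisymm (hxt.trans htx') hx'x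
      exact hlt.ne' hgx'
  · have hivt := intermediate_value_Icc hst hg.continuousOn
    rwa [hgs, hgt] at hivt

theorem exists_Icc_subset_image_eq_of_surjOn_s17 {g : ℝ → ℝ} (hg : Continuous g) {A B u v : ℝ}
    (huv : u ≤ v) (hsurj : SurjOn g (Icc A B) (Icc u v)) :
    ∃ s t, s ≤ t ∧ Icc s t ⊆ Icc A B ∧ g '' Icc s t = Icc u v := by
  obtain ⟨α, ⟨hAα, hαB⟩, rfl⟩ := hsurj (left_mem_Icc.2 huv)
  obtain ⟨β, ⟨hAβ, hβB⟩, rfl⟩ := hsurj (right_mem_Icc.2 huv)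
  rcases le_total α β with hαβ | hβα
  · obtain ⟨s, t, hαs, hst, htβ, himage⟩ := exists_Icc_image_eq_Icc_of_le_s17 hg hαβ huv
    exact ⟨s, t, hst, Icc_subset_Icc (hAα.trans hαs) (htβ.trans hβB), himage⟩
  · obtain ⟨s, t, hαs, hst, htβ, himage⟩ :=
      exists_Icc_image_eq_Icc_of_le_s17 (g := fun x ↦ g (-x)) (hg.comp continuous_neg)
        (neg_le_neg hβα) (by simpa only [neg_neg] using huv)
    refine ⟨-t, -s, neg_le_neg hst, Icc_subset_Icc (by linarith) (by linarith), ?_⟩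
    rw [← neg_Icc, ← image_neg_eq_neg, image_image]
    simpa only [neg_neg] using himage

theorem exists_Icc_image_iterate_eq_of_surjOn {g : ℝ → ℝ} (hg : Continuous g) (n : ℕ)
    (l r : ℕ → ℝ) (hsurj : ∀ k < n, SurjOn g (Icc (l k) (r k)) (Icc (l (k + 1)) (r (k + 1))))
    (hn : l n ≤ r n) :
    ∃ s t, s ≤ t ∧ g^[n] '' Icc s t = Icc (l n) (r n) ∧
      ∀ k ≤ n, MapsTo g^[k] (Icc s t) (Icc (l k) (r k)) := by
  induction n generalizing l r with
  | zero =>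
    refine ⟨l 0, r 0, hn, image_id _, fun k hk ↦ ?_⟩
    obtain rfl := Nat.le_zero.1 hk
    exact mapsTo_id _
  | succ n ih =>
    obtain ⟨s', t', hst', himage', hmaps'⟩ :=
      ih (l ∘ Nat.succ) (r ∘ Nat.succ) (fun k hk ↦ hsurj (k + 1) (by omega)) hn
    obtain ⟨s, t, hst, hsub, himage⟩ := exists_Icc_subset_image_eq_of_surjOn_s17 hg hst'
      ((hsurj 0 n.succ_pos).mono subset_rfl (hmaps' 0 n.zero_le))
    refine ⟨s, t, hst, by rw [iterate_succ, image_comp, himage, himage']; rfl, ?_⟩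
    rintro (_ | k) hk
    · exact hsub
    · rw [iterate_succ]
      exact (hmaps' k (by omega)).comp (himage ▸ mapsTo_image g _)

theorem exists_isPeriodicPt_of_surjOn_Icc {g : ℝ → ℝ} (hg : Continuous g) (n : ℕ)
    (l r : ℕ → ℝ) (hsurj : ∀ k < n, SurjOn g (Icc (l k) (r k)) (Icc (l (k + 1)) (r (k + 1))))
    (hn : l n ≤ r n) (hloop : Icc (l 0) (r 0) ⊆ Icc (l n) (r n)) :
    ∃ x, IsPeriodicPt g n x ∧ ∀ k ≤ n, g^[k] x ∈ Icc (l k) (r k) := by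
  obtain ⟨s, t, hst, himage, hmaps⟩ := exists_Icc_image_iterate_eq_of_surjOn hg n l r hsurj hn
  have hself : SurjOn g^[n] (Icc s t) (Icc s t) := by
    rw [SurjOn, himage]
    exact fun y hy ↦ hloop (hmaps 0 n.zero_le hy)
  obtain ⟨x, hx, hfix⟩ := exists_mem_Icc_isFixedPt_of_surjOn (hg.iterate n).continuousOn hst hself
  exact ⟨x, hfix, fun k hk ↦ hmaps k hk hx⟩

theorem exists_four_cycle_comp_self_of_three_cycle {f : ℝ → ℝ} (hf : Continuous f) {a b c : ℝ}
    (hca : c < a) (hab : a < b) (hfa : f a = b) (hfb : f b = c) (hfc : f c = a) :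
    ∃ y0 y1 y2 y3 : ℝ,
      (f ∘ f) y0 = y1 ∧ (f ∘ f) y1 = y2 ∧ (f ∘ f) y2 = y3 ∧ (f ∘ f) y3 = y0 ∧
      y1 < y0 ∧ y0 < y2 ∧ y2 < y3 := by
  set g := f ∘ f
  have hg : Continuous g := hf.comp hf
  have hga : g a = c := by simp [g, hfa, hfb]
  have hgb : g b = a := by simp [g, hfb, hfc]
  have hgc : g c = b := by simp [g, hfc, hfa]
  obtain ⟨w, ⟨haw, hwb⟩, hfw⟩ :=
    exists_mem_Icc_isFixedPt hf.continuousOn hab.le (hfa ▸ hab.le) (hfb ▸ (hca.trans hab).le)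
  have hgw : g w = w := by simp [g, hfw.eq]
  replace haw : a < w := haw.lt_of_ne fun h ↦ by subst h; linarith [hfw.eq]
  obtain ⟨τ, ⟨hwτ, hτb⟩, hfτ⟩ := hf.continuousOn.surjOn_Icc (right_mem_Icc.2 hwb)
    (left_mem_Icc.2 hwb) (by rw [hfb, hfw.eq]; exact ⟨hca.le, haw.le⟩ : a ∈ Icc (f b) (f w))
  have hgτ : g τ = b := by simp [g, hfτ, hfa]
  obtain ⟨v, ⟨hτv, hvb⟩, hgv⟩ :=
    exists_mem_Icc_isFixedPt hg.continuousOn hτb (hgτ ▸ hτb) (hgb ▸ hab.le)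
  replace hgv : g v = v := hgv
  have hcover : ∀ {A B x y u v : ℝ}, x ∈ Icc A B → y ∈ Icc A B → Icc u v ⊆ Icc (g x) (g y) →
      SurjOn g (Icc A B) (Icc u v) := fun hx hy h ↦
    (hg.continuousOn.surjOn_Icc hx hy).mono subset_rfl h
  have hwv : w ≤ v := hwτ.trans hτv
  have hcov₀ : SurjOn g (Icc a w) (Icc c a) := hcover (x := a) (y := w) ⟨le_rfl, haw.le⟩
    ⟨haw.le, le_rfl⟩ (by rw [hga, hgw]; exact Icc_subset_Icc_right haw.le)
  have hcov₁ : SurjOn g (Icc c a) (Icc w v) := hcover (x := a) (y := c) ⟨hca.le, le_rfl⟩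
    ⟨le_rfl, hca.le⟩ (by rw [hga, hgc]; exact Icc_subset_Icc (hca.trans haw).le hvb)
  have hcov₂ : SurjOn g (Icc w v) (Icc v b) := hcover (x := v) (y := τ) ⟨hwv, le_rfl⟩
    ⟨hwτ, hτv⟩ (by rw [hgv, hgτ])
  have hcov₃ : SurjOn g (Icc v b) (Icc a w) := hcover (x := b) (y := v) ⟨hvb, le_rfl⟩
    ⟨le_rfl, hvb⟩ (by rw [hgb, hgv]; exact Icc_subset_Icc_right hwv)
  obtain ⟨x, hx, hitin⟩ := exists_isPeriodicPt_of_surjOn_Icc hg 4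
    (fun k ↦ [a, c, w, v, a].getD k 0) (fun k ↦ [w, a, v, b, w].getD k 0)
    (by intro k hk; interval_cases k <;> assumption) haw.le subset_rfl
  obtain ⟨hax, hxw⟩ : x ∈ Icc a w := hitin 0 (by norm_num)
  obtain ⟨-, hx₁a⟩ : g x ∈ Icc c a := hitin 1 (by norm_num)
  obtain ⟨hwx₂, hx₂v⟩ : g (g x) ∈ Icc w v := hitin 2 (by norm_num)
  obtain ⟨hvx₃, -⟩ : g (g (g x)) ∈ Icc v b := hitin 3 (by norm_num)
  have hx₄ : g (g (g (g x))) = x := hx.eq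
  have hx_ne_w : x ≠ w := fun h ↦ by rw [h, hgw] at hx₁a; exact haw.not_ge hx₁a
  refine ⟨x, g x, g (g x), g (g (g x)), rfl, rfl, rfl, hx₄, ?_, ?_, ?_⟩
  · refine (hx₁a.trans hax).lt_of_ne fun h ↦ ?_
    obtain rfl : x = a := le_antisymm (h ▸ hx₁a) hax
    exact hca.ne (hga.symm.trans h)
  · exact (hxw.trans hwx₂).lt_of_ne fun h ↦ hx_ne_w (le_antisymm hxw (h ▸ hwx₂))
  · refine (hx₂v.trans hvx₃).lt_of_ne fun h ↦ hx_ne_w (le_antisymm hxw ?_)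
    have hx₂ : g (g x) = v := le_antisymm hx₂v (h ▸ hvx₃)
    rw [← hx₄, ← h, hx₂, hgv]
    exact hwv

theorem exists_four_cycle_comp_self_of_three_cycle' {f : ℝ → ℝ} (hf : Continuous f) {a b c : ℝ}
    (hca : c < a) (hab : a < b) (hfa : f a = c) (hfb : f b = a) (hfc : f c = b) :
    ∃ y0 y1 y2 y3 : ℝ,
      (f ∘ f) y0 = y1 ∧ (f ∘ f) y1 = y2 ∧ (f ∘ f) y2 = y3 ∧ (f ∘ f) y3 = y0 ∧
      y3 < y2 ∧ y2 < y0 ∧ y0 < y1 := by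
  set F : ℝ → ℝ := fun x ↦ -f (-x)
  obtain ⟨z0, z1, z2, z3, h0, h1, h2, h3, h10, h02, h23⟩ :=
    exists_four_cycle_comp_self_of_three_cycle (f := F) (hf.comp continuous_neg).neg
      (neg_lt_neg hab) (neg_lt_neg hca) (by simp [F, hfa]) (by simp [F, hfc]) (by simp [F, hfb])
  have hconj : ∀ z z' : ℝ, (F ∘ F) z = z' → (f ∘ f) (-z) = -z' := by
    intro z z' h
    simp only [F, comp_apply, neg_neg] at h ⊢
    linarith
  exact ⟨-z0, -z1, -z2, -z3, hconj _ _ h0, hconj _ _ h1, hconj _ _ h2, hconj _ _ h3,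
    neg_lt_neg h23, neg_lt_neg h02, neg_lt_neg h10⟩

theorem exists_lt_lt_of_three_cycle {f : ℝ → ℝ} {p : ℝ} (hp3 : f^[3] p = p) (hp1 : f p ≠ p)
    (hp2 : f^[2] p ≠ p) :
    ∃ a b c : ℝ, c < a ∧ a < b ∧
      ((f a = b ∧ f b = c ∧ f c = a) ∨ (f a = c ∧ f b = a ∧ f c = b)) := by
  obtain ⟨q, hfp⟩ : ∃ q, f p = q := ⟨_, rfl⟩
  obtain ⟨r, hfq⟩ : ∃ r, f q = r := ⟨_, rfl⟩
  have hfr : f r = p := by simpa [iterate_succ_apply', hfp, hfq] using hp3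
  have hpq : p ≠ q := hfp ▸ hp1.symm
  have hpr : p ≠ r := by simpa [iterate_succ_apply', hfp, hfq, eq_comm] using hp2
  have hqr : q ≠ r := fun h ↦ hpr (by rw [← hfr, ← h, hfq, h])
  rcases lt_or_gt_of_ne hpq with hpq | hqp <;> rcases lt_or_gt_of_ne hqr with hqr | hrq <;>
    rcases lt_or_gt_of_ne hpr with hpr | hrp
  · exact ⟨q, r, p, hpq, hqr, .inl ⟨hfq, hfr, hfp⟩⟩
  · exact (lt_irrefl p ((hpq.trans hqr).trans hrp)).elim
  · exact ⟨r, q, p, hpr, hrq, .inr ⟨hfr, hfq, hfp⟩⟩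
  · exact ⟨p, q, r, hrp, hpq, .inl ⟨hfp, hfq, hfr⟩⟩
  · exact ⟨p, r, q, hqp, hpr, .inr ⟨hfp, hfr, hfq⟩⟩
  · exact ⟨r, p, q, hqr, hrp, .inl ⟨hfr, hfp, hfq⟩⟩
  · exact (lt_irrefl r ((hrq.trans hqp).trans hpr)).elim
  · exact ⟨q, p, r, hrq, hqp, .inr ⟨hfq, hfp, hfr⟩⟩

theorem stmt_17 (f : ℝ → ℝ) (hf : Continuous f)
    (p : ℝ) (hp3 : f^[3] p = p) (hp1 : f p ≠ p) (hp2 : f^[2] p ≠ p) :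
    ∃ y0 y1 y2 y3 : ℝ,
      (f ∘ f) y0 = y1 ∧ (f ∘ f) y1 = y2 ∧ (f ∘ f) y2 = y3 ∧ (f ∘ f) y3 = y0 ∧
      ((y3 < y2 ∧ y2 < y0 ∧ y0 < y1) ∨ (y1 < y0 ∧ y0 < y2 ∧ y2 < y3)) := by
  obtain ⟨a, b, c, hca, hab, ⟨hfa, hfb, hfc⟩ | ⟨hfa, hfb, hfc⟩⟩ :=
    exists_lt_lt_of_three_cycle hp3 hp1 hp2
  · obtain ⟨y0, y1, y2, y3, h0, h1, h2, h3, hlt⟩ :=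
      exists_four_cycle_comp_self_of_three_cycle hf hca hab hfa hfb hfc
    exact ⟨y0, y1, y2, y3, h0, h1, h2, h3, .inr hlt⟩
  · obtain ⟨y0, y1, y2, y3, h0, h1, h2, h3, hlt⟩ :=
      exists_four_cycle_comp_self_of_three_cycle' hf hca hab hfa hfb hfc
    exact ⟨y0, y1, y2, y3, h0, h1, h2, h3, .inl hlt⟩
end

section
/- If f : ℝ → ℝ is continuous, z is a fixed point of f, and c > z is such that f maps the interval (z, c) onto a set containing c, then there is w ∈ (z, c) with f(w) = c, and inductively there is a backward orbit (w_{-i}) of c (so f(w_{-i}) = w_{-i+1}) with z < w_{-i} < w_{-i+1} for all i ≥ 1, where w_0 = c. -/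
theorem stmt_19 (f : ℝ → ℝ) (hf : Continuous f)
    (z c : ℝ) (hz : f z = z) (hzc : z < c)
    (hc : c ∈ f '' Set.Ioo z c) :
    ∃ w : ℕ → ℝ,
      w 0 = c ∧
      (∀ i, f (w (i + 1)) = w i) ∧
      (∀ i, z < w (i + 1) ∧ w (i + 1) < w i) := by
  obtain ⟨p, hp, hfp⟩ := hc
  have step : ∀ x : ℝ, z < x → x < f x → ∃ y, z < y ∧ y < x ∧ f y = x := by
    intro x hx hfx
    have h := intermediate_value_Ioo (le_of_lt hx) hf.continuousOn (a := z) (b := x)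
    have hmem : x ∈ Set.Ioo (f z) (f x) := by rw [hz]; exact ⟨hx, hfx⟩
    obtain ⟨y, hy, hfy⟩ := h hmem
    exact ⟨y, hy.1, hy.2, hfy⟩
  have nxt : ∀ t : {x : ℝ // z < x ∧ x < f x},
      ∃ s : {x : ℝ // z < x ∧ x < f x}, (s : ℝ) < t ∧ f s = t := by
    rintro ⟨x, hx1, hx2⟩
    obtain ⟨y, hy1, hy2, hy3⟩ := step x hx1 hx2
    exact ⟨⟨y, hy1, by rw [hy3]; exact hy2⟩, hy2, hy3⟩
  choose g hg1 hg2 using nxt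
  have hpc : p < c := hp.2
  set t0 : {x : ℝ // z < x ∧ x < f x} := ⟨p, hp.1, by rw [hfp]; exact hpc⟩ with ht0
  refine ⟨fun n => Nat.rec c (fun n _ => ((g^[n] t0 : {x : ℝ // z < x ∧ x < f x}) : ℝ)) n,
    rfl, ?_, ?_⟩
  · intro i
    cases i with
    | zero => simpa using hfp
    | succ n =>
      show f (g^[n+1] t0 : ℝ) = (g^[n] t0 : ℝ)
      rw [Function.iterate_succ_apply']
      exact hg2 _
  · intro i
    cases i with
    | zero => exact ⟨hp.1, hpc⟩
    | succ n =>
      refine ⟨(g^[n+1] t0).2.1, ?_⟩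
      show ((g^[n+1] t0 : {x : ℝ // z < x ∧ x < f x}) : ℝ) < (g^[n] t0 : ℝ)
      rw [Function.iterate_succ_apply']
      exact hg1 _
end
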